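/- arXiv:1302.6293 — 9 statements merged into one kernel-verified Lean document; each statement's English description precedes it below -/
import Mathlib

section
/- Let n ≥ 1 and d ≥ 2 be integers and a₁,…,aₙ integers with 0 < aⱼ < d for every j. Set C_W := −(1 − e^{2π√−1/d})^{−1} ∏_{j=1}^{n}(1 − e^{−2π√−1·aⱼ/d}) and θ_W := (n−1)/2 − (∑_{j=1}^{n} aⱼ + 1)/d. Then there exists a real number r > 0 such that C_W = r · exp(√−1·π·θ_W). -/
set_option maxHeartbeats 1000000

/-- `1 - e^{it} = 2 sin(t/2) e^{i(t/2 - π/2)}`. -/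



lemma keyP (t : ℂ) : 1 - Complex.exp (t * Complex.I) =
    2 * Complex.sin (t/2) * Complex.exp ((t/2 - (Real.pi:ℂ)/2) * Complex.I) := by
  have hsplit : (t/2 - (Real.pi:ℂ)/2) * Complex.I
      = t/2 * Complex.I + (-((Real.pi:ℂ)/2)) * Complex.I := by ring
  have hpi : Complex.exp ((-((Real.pi:ℂ)/2)) * Complex.I) = -Complex.I := by
    rw [Complex.exp_mul_I, Complex.cos_neg, Complex.sin_neg, Complex.cos_pi_div_two,
      Complex.sin_pi_div_two]; ring
  rw [hsplit, Complex.exp_add, hpi, Complex.sin]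
  have h1 : Complex.exp (-(t/2) * Complex.I) * Complex.exp (t/2 * Complex.I) = 1 := by
    rw [← Complex.exp_add]; ring_nf; exact Complex.exp_zero
  have h2 : Complex.exp (t/2 * Complex.I) * Complex.exp (t/2 * Complex.I)
      = Complex.exp (t * Complex.I) := by
    rw [← Complex.exp_add]; ring_nf
  calc 1 - Complex.exp (t * Complex.I)
      = (Complex.exp (-(t/2) * Complex.I) * Complex.exp (t/2 * Complex.I))
        - Complex.exp (t/2 * Complex.I) * Complex.exp (t/2 * Complex.I) := by rw [h1, h2]
    _ = 2 * ((Complex.exp (-(t/2) * Complex.I) - Complex.exp (t/2 * Complex.I)) * Complex.I / 2) *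
        (Complex.exp (t/2 * Complex.I) * -Complex.I) := by
        have hI : Complex.I * Complex.I = -1 := Complex.I_mul_I
        field_simp
        ring_nf
        rw [Complex.I_sq]
        ring
    _ = _ := by ring

/-- The constant `C_W = -(1 - e^{2π√-1/d})⁻¹ ∏ⱼ (1 - e^{-2π√-1 aⱼ/d})` lies on the ray
`ℝ_{>0} e^{√-1 π θ_W}` where `θ_W = (n-1)/2 - (∑ⱼ aⱼ + 1)/d`. -/
theorem stmt_2 (n : ℕ) (hn : 1 ≤ n) (d : ℕ) (hd : 2 ≤ d) (a : Fin n → ℤ)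
    (ha : ∀ j, 0 < a j ∧ a j < d)
    (CW : ℂ)
    (hCW : CW = -(1 - Complex.exp (2 * Real.pi * Complex.I / d))⁻¹ *
      ∏ j, (1 - Complex.exp (-(2 * Real.pi * Complex.I * (a j : ℂ)) / d)))
    (θW : ℝ)
    (hθW : θW = ((n : ℝ) - 1) / 2 - (((∑ j, a j : ℤ) : ℝ) + 1) / d) :
    ∃ r : ℝ, 0 < r ∧ CW = r * Complex.exp (Complex.I * Real.pi * θW) := by
  obtain ⟨m, rfl⟩ : ∃ m, n = m + 1 := ⟨n - 1, by omega⟩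
  subst hCW hθW
  have hd0 : (d:ℝ) ≠ 0 := by positivity
  have hdi : (d:ℂ) ≠ 0 := by exact_mod_cast (by positivity : (d:ℝ) ≠ 0)
  have hπ := Real.pi_pos
  -- positive reals
  set s0 : ℝ := Real.sin (Real.pi / d) with hs0def
  set sj : Fin (m+1) → ℝ := fun j => Real.sin (Real.pi * (a j) / d) with hsjdef
  have hdr : (2:ℝ) ≤ (d:ℝ) := by exact_mod_cast hd
  have hdpos : (0:ℝ) < d := by linarith
  have hs0 : 0 < s0 := by
    apply Real.sin_pos_of_pos_of_lt_pi
    · positivity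
    · rw [div_lt_iff₀ hdpos]
      have : Real.pi * 1 < Real.pi * d := by
        apply mul_lt_mul_of_pos_left _ hπ; linarith
      linarith
  have hsj : ∀ j, 0 < sj j := by
    intro j
    have h1 : (0:ℝ) < (a j : ℝ) := by exact_mod_cast (ha j).1
    have h2 : (a j : ℝ) < d := by exact_mod_cast (ha j).2
    apply Real.sin_pos_of_pos_of_lt_pi
    · positivity
    · rw [div_lt_iff₀ hdpos]
      have := mul_lt_mul_of_pos_left h2 hπ
      linarith
  set P : ℝ := ∏ j, (2 * sj j) with hPdef
  have hP : 0 < P := Finset.prod_pos fun j _ => mul_pos two_pos (hsj j)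
  refine ⟨P / (2 * s0), div_pos hP (by linarith), ?_⟩
  -- rewrite head factor
  have e0 : (1:ℂ) - Complex.exp (2 * Real.pi * Complex.I / d)
      = ((2 * s0 : ℝ) : ℂ) * Complex.exp (((Real.pi/d - Real.pi/2 : ℝ) : ℂ) * Complex.I) := by
    have h : (2 * Real.pi * Complex.I / d) = (((2*Real.pi/d : ℝ)):ℂ) * Complex.I := by
      push_cast; ring
    rw [h, keyP]
    have h2 : (((2*Real.pi/d : ℝ)):ℂ)/2 = (((Real.pi/d : ℝ)):ℂ) := by push_cast; ring
    rw [h2, ← Complex.ofReal_sin]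
    push_cast [hs0def]
    ring
  -- rewrite each factor
  have ej : ∀ j, (1:ℂ) - Complex.exp (-(2 * Real.pi * Complex.I * (a j : ℂ)) / d)
      = ((-(2 * sj j) : ℝ) : ℂ) *
        Complex.exp (((-(Real.pi * (a j) / d) - Real.pi/2 : ℝ) : ℂ) * Complex.I) := by
    intro j
    have h : -(2 * Real.pi * Complex.I * (a j : ℂ)) / d
        = (((-(2*Real.pi*(a j)/d) : ℝ)):ℂ) * Complex.I := by push_cast; ring
    rw [h, keyP]
    have h2 : (((-(2*Real.pi*(a j : ℝ)/d) : ℝ)):ℂ)/2 = (((-(Real.pi*(a j)/d) : ℝ)):ℂ) := by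
      push_cast; ring
    rw [h2, ← Complex.ofReal_sin, Real.sin_neg]
    push_cast [hsjdef]
    ring
  rw [e0]
  rw [Finset.prod_congr rfl (fun j _ => ej j)]
  rw [Finset.prod_mul_distrib]
  -- combine product of reals
  have hprod1 : (∏ j, (((-(2 * sj j) : ℝ)):ℂ)) = ((-1:ℂ))^(m+1) * (P:ℂ) := by
    rw [← Complex.ofReal_prod]
    have : (∏ j, (-(2 * sj j))) = (-1:ℝ)^(m+1) * P := by
      rw [hPdef]
      calc ∏ j, (-(2 * sj j)) = ∏ j : Fin (m+1), ((-1:ℝ) * (2 * sj j)) := by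
            apply Finset.prod_congr rfl; intros; ring
        _ = (∏ _j : Fin (m+1), (-1:ℝ)) * ∏ j, (2 * sj j) := Finset.prod_mul_distrib
        _ = (-1:ℝ)^(m+1) * ∏ j, (2 * sj j) := by
            rw [Finset.prod_const, Finset.card_univ, Fintype.card_fin]
    rw [this]; push_cast; ring
  -- combine product of exps
  set S : ℝ := ∑ j, (-(Real.pi * (a j) / d) - Real.pi/2) with hSdef
  have hprod2 : (∏ j, Complex.exp ((((-(Real.pi * (a j) / d) - Real.pi/2 : ℝ)):ℂ) * Complex.I))
      = Complex.exp ((S:ℂ) * Complex.I) := by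
    rw [← Complex.exp_sum, ← Finset.sum_mul, hSdef]
    norm_cast
  rw [hprod1, hprod2]
  -- the phase identity
  have hreal : Real.pi * (((m:ℝ) + 1 - 1) / 2 - (((∑ j, a j : ℤ) : ℝ) + 1) / d)
      = S - (Real.pi/d - Real.pi/2) + m * Real.pi := by
    rw [hSdef]
    rw [Finset.sum_sub_distrib, Finset.sum_const, Finset.card_univ, Fintype.card_fin]
    have hsum : (((∑ j, a j : ℤ) : ℝ)) = ∑ j, ((a j : ℝ)) := by push_cast; rfl
    rw [hsum]
    rw [show (∑ j, -(Real.pi * (a j : ℝ) / d)) = -(Real.pi/d) * ∑ j, ((a j:ℝ)) by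
      rw [Finset.mul_sum]; apply Finset.sum_congr rfl; intros; ring]
    field_simp
    ring
  have hθ' : Complex.I * (Real.pi:ℂ) * ((((((m+1:ℕ)):ℝ) - 1) / 2 - (((∑ j, a j : ℤ) : ℝ) + 1) / d : ℝ):ℂ)
      = (S:ℂ) * Complex.I + (-((((Real.pi/d - Real.pi/2 : ℝ)):ℂ) * Complex.I))
        + (m:ℂ) * ((Real.pi:ℂ) * Complex.I) := by
    have h3 : Complex.I * (Real.pi:ℂ) * ((((((m+1:ℕ)):ℝ) - 1) / 2 - (((∑ j, a j : ℤ) : ℝ) + 1) / d : ℝ):ℂ)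
        = ((Real.pi * (((m:ℝ) + 1 - 1) / 2 - (((∑ j, a j : ℤ) : ℝ) + 1) / d) : ℝ):ℂ) * Complex.I := by
      push_cast; ring
    rw [h3, hreal]
    push_cast; ring
  rw [hθ', Complex.exp_add, Complex.exp_add]
  have hm : Complex.exp ((m:ℂ) * ((Real.pi:ℂ) * Complex.I)) = (-1:ℂ)^m := by
    rw [Complex.exp_nat_mul, Complex.exp_pi_mul_I]
  rw [hm, Complex.exp_neg]
  have hE0 : Complex.exp ((((Real.pi/d - Real.pi/2 : ℝ)):ℂ) * Complex.I) ≠ 0 := Complex.exp_ne_zero _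
  have h2s0 : ((2 * s0 : ℝ):ℂ) ≠ 0 := by
    exact_mod_cast (by positivity : (2*s0 : ℝ) ≠ 0)
  push_cast
  field_simp
  ring_nf
end

section
/- Let n ≥ 1 and d ≥ 2 be integers, a₁,…,aₙ integers with 0 < aⱼ < d for every j, and set C_W := −(1 − e^{2π√−1/d})^{−1} ∏_{j=1}^{n}(1 − e^{−2π√−1·aⱼ/d}) and θ_W := (n−1)/2 − (∑_{j=1}^{n} aⱼ + 1)/d. Then: (i) there exists a real r > 0 with −C_W = r · exp(√−1·π·(θ_W + 1)); and (ii) for every integer j there exists a real ρ > 0 with C_W · e^{2π√−1·j/d} · (1 − e^{2π√−1/d}) = ρ · exp(√−1·π·(θ_W + 1/d + 2j/d + 3/2)). -/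
/-- `1 - e^{ix} = 2 sin(x/2) e^{i(x/2 - π/2)}` for real `x`. -/
lemma polar1 (x : ℝ) : (1:ℂ) - Complex.exp (Complex.I * (x:ℂ)) =
    ((2 * Real.sin (x/2) : ℝ) : ℂ) *
      Complex.exp (Complex.I * ((x/2 - Real.pi/2 : ℝ) : ℂ)) := by
  rw [show Complex.I * (x:ℂ) = (x:ℂ) * Complex.I by ring,
      show Complex.I * (((x/2 - Real.pi/2 : ℝ)) : ℂ) = (((x/2 - Real.pi/2 : ℝ)) : ℂ) * Complex.I by ring,
      Complex.exp_mul_I, Complex.exp_mul_I, ← Complex.ofReal_cos, ← Complex.ofReal_sin,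
      ← Complex.ofReal_cos, ← Complex.ofReal_sin,
      Real.cos_sub_pi_div_two, Real.sin_sub_pi_div_two]
  simp only [Complex.ext_iff, Complex.sub_re, Complex.sub_im, Complex.one_re, Complex.one_im,
    Complex.add_re, Complex.add_im, Complex.mul_re, Complex.mul_im, Complex.ofReal_re,
    Complex.ofReal_im, Complex.I_re, Complex.I_im, Complex.ofReal_neg, Complex.neg_re, Complex.neg_im]
  constructor
  · have h1 : Real.cos x = 1 - 2 * Real.sin (x/2)^2 := by
      have h := Real.cos_two_mul (x/2)
      rw [show 2*(x/2) = x by ring] at h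
      nlinarith [Real.sin_sq_add_cos_sq (x/2)]
    nlinarith
  · have h2 : Real.sin x = 2 * Real.sin (x/2) * Real.cos (x/2) := by
      have := Real.sin_two_mul (x/2)
      rw [show 2*(x/2) = x by ring] at this
      linarith
    nlinarith

/-- `1 - e^{-ix} = 2 sin(x/2) e^{i(π/2 - x/2)}` for real `x`. -/
lemma polar2 (x : ℝ) : (1:ℂ) - Complex.exp (-(Complex.I * (x:ℂ))) =
    ((2 * Real.sin (x/2) : ℝ) : ℂ) *
      Complex.exp (Complex.I * ((Real.pi/2 - x/2 : ℝ) : ℂ)) := by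
  rw [show -(Complex.I * (x:ℂ)) = ((-x : ℝ):ℂ) * Complex.I by push_cast; ring,
      show Complex.I * (((Real.pi/2 - x/2 : ℝ)) : ℂ) = (((Real.pi/2 - x/2 : ℝ)) : ℂ) * Complex.I by ring,
      Complex.exp_mul_I, Complex.exp_mul_I, ← Complex.ofReal_cos, ← Complex.ofReal_sin,
      ← Complex.ofReal_cos, ← Complex.ofReal_sin,
      Real.cos_pi_div_two_sub, Real.sin_pi_div_two_sub, Real.cos_neg, Real.sin_neg]
  simp only [Complex.ext_iff, Complex.sub_re, Complex.sub_im, Complex.one_re, Complex.one_im,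
    Complex.add_re, Complex.add_im, Complex.mul_re, Complex.mul_im, Complex.ofReal_re,
    Complex.ofReal_im, Complex.I_re, Complex.I_im, Complex.ofReal_neg, Complex.neg_re, Complex.neg_im]
  constructor
  · have h1 : Real.cos x = 1 - 2 * Real.sin (x/2)^2 := by
      have h := Real.cos_two_mul (x/2)
      rw [show 2*(x/2) = x by ring] at h
      nlinarith [Real.sin_sq_add_cos_sq (x/2)]
    nlinarith
  · have h2 : Real.sin x = 2 * Real.sin (x/2) * Real.cos (x/2) := by
      have := Real.sin_two_mul (x/2)
      rw [show 2*(x/2) = x by ring] at this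
      linarith
    nlinarith

/-- Polar forms of the Gepner central charge values `Z_G(Ψ(O_x)) = -C_W` and
`Z_G(ℂ(j)) = C_W e^{2π√-1 j/d} (1 - e^{2π√-1/d})`. -/
theorem stmt_3 (n : ℕ) (hn : 1 ≤ n) (d : ℕ) (hd : 2 ≤ d) (a : Fin n → ℤ)
    (ha : ∀ j, 0 < a j ∧ a j < d)
    (CW : ℂ)
    (hCW : CW = -(1 - Complex.exp (2 * Real.pi * Complex.I / d))⁻¹ *
      ∏ j, (1 - Complex.exp (-(2 * Real.pi * Complex.I * (a j : ℂ)) / d)))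
    (θW : ℝ)
    (hθW : θW = ((n : ℝ) - 1) / 2 - (((∑ j, a j : ℤ) : ℝ) + 1) / d) :
    (∃ r : ℝ, 0 < r ∧ -CW = r * Complex.exp (Complex.I * Real.pi * ((θW + 1 : ℝ) : ℂ))) ∧
    (∀ j : ℤ, ∃ ρ : ℝ, 0 < ρ ∧
      CW * Complex.exp (2 * Real.pi * Complex.I * (j : ℂ) / d) *
          (1 - Complex.exp (2 * Real.pi * Complex.I / d)) =
        ρ * Complex.exp (Complex.I * Real.pi *
          ((θW + 1 / (d : ℝ) + 2 * (j : ℝ) / (d : ℝ) + 3 / 2 : ℝ) : ℂ))) := by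
  have hπ := Real.pi_pos
  have hdR : (0:ℝ) < d := by
    have : (0:ℕ) < d := by omega
    exact_mod_cast this
  have hd0 : (d:ℝ) ≠ 0 := ne_of_gt hdR
  have hd2 : (2:ℝ) ≤ d := by exact_mod_cast hd
  -- the denominator factor
  have e0 : (1 : ℂ) - Complex.exp (2 * Real.pi * Complex.I / d)
      = ((2 * Real.sin (Real.pi / d) : ℝ) : ℂ) *
        Complex.exp (Complex.I * ((Real.pi/d - Real.pi/2 : ℝ) : ℂ)) := by
    have h := polar1 (2*Real.pi/d)
    rw [show (2*Real.pi/(d:ℝ))/2 = Real.pi/d from by ring] at h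
    rw [show Complex.I * (((2*Real.pi/(d:ℝ)) : ℝ):ℂ) = 2*(Real.pi:ℂ)*Complex.I/(d:ℂ) from by
      push_cast; ring] at h
    exact h
  -- the numerator factors
  have ej : ∀ j : Fin n, (1:ℂ) - Complex.exp (-(2 * Real.pi * Complex.I * (a j : ℂ)) / d)
      = ((2 * Real.sin (Real.pi * (a j : ℝ) / d) : ℝ):ℂ) *
        Complex.exp (Complex.I * ((Real.pi/2 - Real.pi*(a j : ℝ)/d : ℝ):ℂ)) := by
    intro j
    have h := polar2 (2*Real.pi*(a j : ℝ)/d)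
    rw [show (2*Real.pi*(a j : ℝ)/(d:ℝ))/2 = Real.pi*(a j : ℝ)/d from by ring] at h
    rw [show -(Complex.I * (((2*Real.pi*(a j : ℝ)/(d:ℝ)) : ℝ):ℂ))
        = -(2*(Real.pi:ℂ)*Complex.I*((a j : ℤ):ℂ))/(d:ℂ) from by push_cast; ring] at h
    exact h
  -- product in polar form
  have hprod : (∏ j, ((1:ℂ) - Complex.exp (-(2*Real.pi*Complex.I*((a j : ℤ):ℂ))/d)))
      = (((∏ j, (2 * Real.sin (Real.pi * (a j : ℝ) / d))) : ℝ) : ℂ) *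
        Complex.exp (Complex.I * (((∑ j, (Real.pi/2 - Real.pi*(a j : ℝ)/d)) : ℝ) : ℂ)) := by
    rw [Finset.prod_congr rfl (fun j _ => ej j), Finset.prod_mul_distrib,
      ← Complex.ofReal_prod, ← Complex.exp_sum, ← Finset.mul_sum, ← Complex.ofReal_sum]
  -- positivity
  have hsin0 : 0 < Real.sin (Real.pi / d) := by
    apply Real.sin_pos_of_pos_of_lt_pi (by positivity)
    rw [div_lt_iff₀ hdR]; nlinarith
  have hsinj : ∀ j : Fin n, 0 < Real.sin (Real.pi * (a j : ℝ) / d) := by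
    intro j
    have h1 : (0:ℝ) < (a j : ℝ) := by exact_mod_cast (ha j).1
    have h2 : ((a j : ℝ)) < d := by exact_mod_cast (ha j).2
    apply Real.sin_pos_of_pos_of_lt_pi (by positivity)
    rw [div_lt_iff₀ hdR]; nlinarith
  have hSpos : 0 < ∏ j, (2 * Real.sin (Real.pi * (a j : ℝ) / d)) :=
    Finset.prod_pos fun j _ => by linarith [hsinj j]
  -- key polar form of -CW
  set S : ℝ := ∏ j, (2 * Real.sin (Real.pi * (a j : ℝ) / d)) with hS
  set T : ℝ := ∑ j, (Real.pi/2 - Real.pi*(a j : ℝ)/d) with hT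
  set c₀ : ℝ := 2 * Real.sin (Real.pi / d) with hc₀
  set γ₀ : ℝ := Real.pi/d - Real.pi/2 with hγ₀
  have hc₀pos : 0 < c₀ := by rw [hc₀]; linarith
  clear_value S T c₀ γ₀
  have key : -CW = ((c₀⁻¹ * S : ℝ) : ℂ) * Complex.exp (Complex.I * ((T - γ₀ : ℝ) : ℂ)) := by
    rw [hCW, e0, hprod,
      show Complex.I * ((T - γ₀ : ℝ):ℂ) = Complex.I * (T:ℂ) - Complex.I * (γ₀:ℂ) from by
        push_cast; ring,
      Complex.exp_sub, Complex.ofReal_mul, Complex.ofReal_inv, mul_inv, div_eq_mul_inv]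
    ring
  -- the total angle
  have hTval : T = n*(Real.pi/2) - Real.pi * (((∑ j, a j : ℤ) : ℝ))/d := by
    rw [hT, Finset.sum_sub_distrib, Finset.sum_const, Finset.card_univ, Fintype.card_fin,
      nsmul_eq_mul]
    push_cast
    rw [← Finset.sum_div, ← Finset.mul_sum]
  have hangle : T - γ₀ = Real.pi * (θW + 1) := by
    rw [hTval, hγ₀, hθW]; field_simp; ring
  refine ⟨⟨c₀⁻¹ * S, mul_pos (inv_pos.mpr hc₀pos) hSpos, ?_⟩, ?_⟩
  · rw [key, hangle]
    congr 1
    push_cast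
    ring
  · intro j
    refine ⟨c₀⁻¹ * S * c₀, mul_pos (mul_pos (inv_pos.mpr hc₀pos) hSpos) hc₀pos, ?_⟩
    have hCW' : CW = -(((c₀⁻¹ * S : ℝ) : ℂ) * Complex.exp (Complex.I * ((T - γ₀ : ℝ) : ℂ))) := by
      rw [← key]; ring
    rw [hCW', e0,
      show (2*(Real.pi:ℂ)*Complex.I*((j:ℤ):ℂ)/(d:ℂ)) = Complex.I * (((2*Real.pi*(j:ℝ)/(d:ℝ)) : ℝ):ℂ)
        from by push_cast; ring]
    rw [show Complex.I * (Real.pi:ℂ) * (((θW + 1/(d:ℝ) + 2*(j:ℝ)/(d:ℝ) + 3/2 : ℝ)) : ℂ)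
        = Complex.I * (((T - γ₀) + 2*Real.pi*(j:ℝ)/(d:ℝ) + γ₀ + Real.pi : ℝ) : ℂ) from by
      rw [hangle, hγ₀]
      push_cast
      field_simp
      ring]
    rw [show (((T - γ₀) + 2*Real.pi*(j:ℝ)/(d:ℝ) + γ₀ + Real.pi : ℝ) : ℂ)
        = ((T - γ₀ : ℝ):ℂ) + ((2*Real.pi*(j:ℝ)/(d:ℝ) : ℝ):ℂ) + ((γ₀:ℝ):ℂ) + ((Real.pi:ℝ):ℂ) from by
      push_cast; ring]
    rw [show Complex.I * (((T - γ₀ : ℝ):ℂ) + ((2*Real.pi*(j:ℝ)/(d:ℝ) : ℝ):ℂ) + ((γ₀:ℝ):ℂ) + ((Real.pi:ℝ):ℂ))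
        = Complex.I * ((T - γ₀ : ℝ):ℂ) + Complex.I * ((2*Real.pi*(j:ℝ)/(d:ℝ) : ℝ):ℂ)
          + Complex.I * ((γ₀:ℝ):ℂ) + (Real.pi:ℂ) * Complex.I from by ring]
    rw [Complex.exp_add, Complex.exp_add, Complex.exp_add, Complex.exp_pi_mul_I]
    push_cast
    ring
end

section
/- For an integer m ≥ 1, let M be the 3×3 complex matrix with rows (−(m+1), −2m, −1), (1, 1, 0), (m, 2m, 1). Then det(M − λ·I) = −(λ + 1)(λ² + (m − 2)λ + 1) for all λ ∈ ℂ. Consequently, if d ≥ 4 is an integer such that e^{2π√−1/d} is an eigenvalue of M, then (m, d) = (2, 4) or (m, d) = (1, 6). -/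
/-!
The characteristic polynomial factors as `-(λ + 1)(λ² + (m - 2)λ + 1)`. The root of unity
`ζ = e^{2πi/d}` with `d ≥ 4` has positive imaginary part, so `ζ ≠ -1` and `ζ` is a root of the
quadratic factor. Dividing by `ζ` and using `ζ⁻¹ = conj ζ` gives `2 cos(2π/d) = 2 - m`. Since
`0 < 2π/d ≤ π/2`, the left side lies in `[0, 2)`, so `m ∈ {1, 2}`, i.e. `cos(2π/d) ∈ {1/2, 0}`,
and injectivity of `cos` on `[0, π]` forces `d = 6` resp. `d = 4`.
-/

open Real

def twistMatrix (m : ℂ) : Matrix (Fin 3) (Fin 3) ℂ :=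
  !![-(m + 1), -(2 * m), -1; 1, 1, 0; m, 2 * m, 1]

theorem det_twistMatrix_sub_smul_one (m z : ℂ) :
    (twistMatrix m - z • (1 : Matrix (Fin 3) (Fin 3) ℂ)).det =
      -(z + 1) * (z ^ 2 + (m - 2) * z + 1) := by
  rw [Matrix.det_fin_three]
  simp [twistMatrix]
  ring

theorem Matrix.det_sub_smul_one_eq_zero_of_mulVec_eq_smul {n R : Type*} [Fintype n]
    [DecidableEq n] [CommRing R] [IsDomain R] {M : Matrix n n R} {z : R} {v : n → R}
    (hv0 : v ≠ 0) (hv : M.mulVec v = z • v) : (M - z • 1).det = 0 :=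
  Matrix.exists_mulVec_eq_zero_iff.mp
    ⟨v, hv0, by rw [Matrix.sub_mulVec, Matrix.smul_mulVec, Matrix.one_mulVec, hv, sub_self]⟩

theorem Complex.two_mul_re_add_eq_zero_of_sq_add_mul_add_one_eq_zero {z : ℂ} {c : ℝ}
    (hz : ‖z‖ = 1) (h : z ^ 2 + c * z + 1 = 0) : 2 * z.re + c = 0 := by
  have hz0 : z ≠ 0 := norm_ne_zero_iff.mp (hz ▸ one_ne_zero)
  have hsum : z + starRingEnd ℂ z + c = 0 := by
    rw [← inv_eq_conj hz]
    field_simp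
    linear_combination h
  have := congrArg re hsum
  rwa [add_conj, add_re, ofReal_re, ofReal_re] at this

theorem Complex.exp_two_pi_I_div_nat (d : ℕ) :
    exp (2 * π * I / d) = exp ((2 * π / d : ℝ) * I) := by
  push_cast
  ring_nf

theorem two_pi_div_mem_Ioc {d : ℕ} (hd : 4 ≤ d) : 2 * π / d ∈ Set.Ioc 0 (π / 2) := by
  have hd' : (4 : ℝ) ≤ d := by exact_mod_cast hd
  refine ⟨by positivity, ?_⟩
  rw [div_le_div_iff₀ (by positivity) two_pos]
  nlinarith [pi_pos]

theorem Nat.eq_of_cos_two_pi_div_eq {d k : ℕ} (hd : 2 ≤ d) (hk : 2 ≤ k)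
    (h : cos (2 * π / d) = cos (2 * π / k)) : d = k := by
  have mem {n : ℕ} (hn : 2 ≤ n) : 2 * π / n ∈ Set.Icc 0 π := by
    have hn' : (2 : ℝ) ≤ n := by exact_mod_cast hn
    refine ⟨by positivity, ?_⟩
    rw [div_le_iff₀ (by positivity)]
    nlinarith [pi_pos]
  have := injOn_cos (mem hd) (mem hk) h
  rw [div_eq_mul_inv, div_eq_mul_inv, mul_right_inj' (by positivity), inv_inj] at this
  exact_mod_cast this

theorem eq_of_two_mul_cos_two_pi_div_add_eq_zero {m : ℤ} {d : ℕ} (hd : 4 ≤ d)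
    (h : 2 * cos (2 * π / d) + (m - 2) = 0) : (m = 2 ∧ d = 4) ∨ (m = 1 ∧ d = 6) := by
  obtain ⟨hpos, hle⟩ := two_pi_div_mem_Ioc hd
  have hcos_nonneg : 0 ≤ cos (2 * π / d) := cos_nonneg_of_mem_Icc ⟨by linarith [pi_pos], hle⟩
  have hcos_lt_one : cos (2 * π / d) < 1 := by
    simpa using strictAntiOn_cos ⟨le_rfl, pi_pos.le⟩ ⟨hpos.le, by linarith [pi_pos]⟩ hpos
  have hm : m = 1 ∨ m = 2 := by
    have : (0 : ℝ) < m ∧ (m : ℝ) ≤ 2 := ⟨by linarith, by linarith⟩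
    have : 0 < m ∧ m ≤ 2 := by exact_mod_cast this
    omega
  rcases hm with rfl | rfl
  · refine .inr ⟨rfl, Nat.eq_of_cos_two_pi_div_eq (by omega) (by norm_num) ?_⟩
    have : 2 * π / ((6 : ℕ) : ℝ) = π / 3 := by push_cast; ring
    rw [this, cos_pi_div_three]
    push_cast at h
    linarith
  · refine .inl ⟨rfl, Nat.eq_of_cos_two_pi_div_eq (by omega) (by norm_num) ?_⟩
    have : 2 * π / ((4 : ℕ) : ℝ) = π / 2 := by push_cast; ring
    rw [this, cos_pi_div_two]
    push_cast at h
    linarith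

theorem stmt_4_general (m : ℤ)
    (M : Matrix (Fin 3) (Fin 3) ℂ)
    (hM : M = !![-((m : ℂ) + 1), -(2 * (m : ℂ)), -1; 1, 1, 0; (m : ℂ), 2 * (m : ℂ), 1]) :
    (∀ z : ℂ, (M - z • (1 : Matrix (Fin 3) (Fin 3) ℂ)).det =
      -(z + 1) * (z ^ 2 + ((m : ℂ) - 2) * z + 1)) ∧
    (∀ d : ℕ, 4 ≤ d →
      (∃ v : Fin 3 → ℂ, v ≠ 0 ∧
        M.mulVec v = Complex.exp (2 * Real.pi * Complex.I / d) • v) →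
      (m = 2 ∧ d = 4) ∨ (m = 1 ∧ d = 6)) := by
  change M = twistMatrix m at hM
  subst hM
  refine ⟨det_twistMatrix_sub_smul_one m, fun d hd ⟨v, hv0, hv⟩ => ?_⟩
  have hdet := Matrix.det_sub_smul_one_eq_zero_of_mulVec_eq_smul hv0 hv
  rw [det_twistMatrix_sub_smul_one, Complex.exp_two_pi_I_div_nat] at hdet
  set ζ := Complex.exp ((2 * π / d : ℝ) * Complex.I)
  have hζ_ne : ζ + 1 ≠ 0 := fun h => by
    have := congrArg Complex.im h
    rw [Complex.add_im, Complex.exp_ofReal_mul_I_im, Complex.one_im, add_zero,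
      Complex.zero_im] at this
    obtain ⟨hpos, hle⟩ := two_pi_div_mem_Ioc hd
    exact (sin_pos_of_pos_of_lt_pi hpos (by linarith [pi_pos])).ne' this
  have hquad : ζ ^ 2 + ((m - 2 : ℝ) : ℂ) * ζ + 1 = 0 := by
    push_cast
    exact (mul_eq_zero.mp hdet).resolve_left (neg_ne_zero.mpr hζ_ne)
  have hre := Complex.two_mul_re_add_eq_zero_of_sq_add_mul_add_one_eq_zero
    (Complex.norm_exp_ofReal_mul_I _) hquad
  rw [Complex.exp_ofReal_mul_I_re] at hre
  exact eq_of_two_mul_cos_two_pi_div_add_eq_zero hd hre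

/-- For the matrix `M` of the autoequivalence `ST_{O_X} ∘ (⊗ O_X(1))` on the algebraic
cohomology of a K3 surface of degree `2m`:
`det(M - λI) = -(λ+1)(λ² + (m-2)λ + 1)`, and if `e^{2π√-1/d}` is an eigenvalue of `M`
for some `d ≥ 4`, then `(m,d) = (2,4)` or `(1,6)`. -/
theorem stmt_4 (m : ℤ) (hm : 1 ≤ m)
    (M : Matrix (Fin 3) (Fin 3) ℂ)
    (hM : M = !![-((m : ℂ) + 1), -(2 * (m : ℂ)), -1; 1, 1, 0; (m : ℂ), 2 * (m : ℂ), 1]) :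
    (∀ z : ℂ, (M - z • (1 : Matrix (Fin 3) (Fin 3) ℂ)).det =
      -(z + 1) * (z ^ 2 + ((m : ℂ) - 2) * z + 1)) ∧
    (∀ d : ℕ, 4 ≤ d →
      (∃ v : Fin 3 → ℂ, v ≠ 0 ∧
        M.mulVec v = Complex.exp (2 * Real.pi * Complex.I / d) • v) →
      (m = 2 ∧ d = 4) ∨ (m = 1 ∧ d = 6)) :=
  stmt_4_general m M hM
end

section
/- Let d ≥ 3 be an integer, ζ := e^{2π√−1/d}, h := 2 − 2cos(2π/d), and let F : ℂ² → ℂ² be the linear map F(r, δ) = ((1 − h)·r − δ, h·r + δ). Then the linear functional Z(r, δ) := −δ + (ζ − 1)·r satisfies Z ∘ F = ζ·Z, i.e. Z(F(v)) = ζ·Z(v) for all v ∈ ℂ²; moreover every linear functional ψ : ℂ² → ℂ satisfying ψ ∘ F = ζ·ψ is a scalar multiple of Z. Explicitly, Z(r, δ) = −δ + r(cos(2π/d) − 1) + r·sin(2π/d)·√−1. -/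
/-- The Gepner central charge on an elliptic curve: the functional
`Z(r, δ) = -δ + (ζ - 1) r` is, up to scalar, the unique eigenvector with eigenvalue
`ζ = e^{2π√-1/d}` for the dual action of `F(r, δ) = ((1-h)r - δ, hr + δ)`,
where `h = 2 - 2cos(2π/d)`. -/
theorem stmt_6 (d : ℕ) (hd : 3 ≤ d)
    (ζ : ℂ) (hζ : ζ = Complex.exp (2 * Real.pi * Complex.I / d))
    (h : ℝ) (hh : h = 2 - 2 * Real.cos (2 * Real.pi / d))
    (F : (ℂ × ℂ) →ₗ[ℂ] (ℂ × ℂ))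
    (hF : ∀ r δ : ℂ, F (r, δ) = ((1 - (h : ℂ)) * r - δ, (h : ℂ) * r + δ))
    (Z : (ℂ × ℂ) →ₗ[ℂ] ℂ)
    (hZ : ∀ r δ : ℂ, Z (r, δ) = -δ + (ζ - 1) * r) :
    (∀ v : ℂ × ℂ, Z (F v) = ζ * Z v) ∧
    (∀ ψ : (ℂ × ℂ) →ₗ[ℂ] ℂ, (∀ v, ψ (F v) = ζ * ψ v) → ∃ c : ℂ, ψ = c • Z) ∧
    (∀ r δ : ℂ, Z (r, δ) = -δ + r * ((Real.cos (2 * Real.pi / d) : ℂ) - 1) +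
      r * (Real.sin (2 * Real.pi / d) : ℂ) * Complex.I) := by
  set θ : ℝ := 2 * Real.pi / d with hθdef
  have hθ : ζ = (Real.cos θ : ℂ) + (Real.sin θ : ℂ) * Complex.I := by
    rw [hζ]
    have e1 : (2 : ℂ) * Real.pi * Complex.I / d = (θ : ℂ) * Complex.I := by
      rw [hθdef]; push_cast; ring
    rw [e1, Complex.exp_mul_I, Complex.ofReal_cos, Complex.ofReal_sin]
  have pyth : Complex.sin (θ : ℂ) ^ 2 + Complex.cos (θ : ℂ) ^ 2 = 1 :=
    Complex.sin_sq_add_cos_sq _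
  have key : (ζ - 1) * (1 - (h : ℂ)) - (h : ℂ) = ζ * (ζ - 1) := by
    rw [hθ, hh]
    push_cast [Complex.ofReal_cos, Complex.ofReal_sin]
    linear_combination pyth - Complex.sin (θ : ℂ) ^ 2 * Complex.I_sq
  have hv : ∀ (φ : (ℂ × ℂ) →ₗ[ℂ] ℂ) (r δ : ℂ),
      φ (r, δ) = r * φ (1, 0) + δ * φ (0, 1) := by
    intro φ r δ
    have e : (r, δ) = r • ((1 : ℂ), (0 : ℂ)) + δ • ((0 : ℂ), (1 : ℂ)) := by
      simp [Prod.ext_iff]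
    rw [e, map_add, map_smul, map_smul, smul_eq_mul, smul_eq_mul]
  refine ⟨?_, ?_, ?_⟩
  · rintro ⟨r, δ⟩
    rw [hF, hZ, hZ]
    linear_combination r * key
  · intro ψ hψ
    have ha : ψ (1, 0) = (1 - ζ) * ψ (0, 1) := by
      have h2 := hψ (0, 1)
      rw [hF 0 1] at h2
      norm_num at h2
      rw [hv ψ (-1) 1] at h2
      linear_combination -h2
    refine ⟨-ψ (0, 1), ?_⟩
    apply LinearMap.ext
    rintro ⟨r, δ⟩
    rw [LinearMap.smul_apply, smul_eq_mul, hZ, hv ψ r δ, ha]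
    ring
  · intro r δ
    rw [hZ, hθ]
    ring
end

section
/- Let (m, d) = (2, 4) or (m, d) = (1, 6), set ζ := e^{2π√−1/d}, and let M be the 3×3 complex matrix with rows (−(m+1), −2m, −1), (1, 1, 0), (m, 2m, 1), regarded as a linear map on column vectors (c₀, c₁, c₂) ∈ ℂ³. Then the linear functional ψ(c₀, c₁, c₂) := (ζ − 1)·c₀ + (2mζ/(1 − ζ))·c₁ − c₂ satisfies ψ(M·v) = ζ·ψ(v) for all v ∈ ℂ³, and every linear functional ψ' : ℂ³ → ℂ with ψ' ∘ M = ζ·ψ' is a scalar multiple of ψ. -/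
/-!
`ζ` is a primitive fourth root of unity when `m = 2` and a primitive sixth root when `m = 1`;
in both cases it satisfies `ζ² + (m - 2)ζ + 1 = 0`, the quadratic factor of the characteristic
polynomial `(λ + 1)(λ² + (m - 2)λ + 1)` of `M`. Writing a functional as `v ↦ w ⬝ᵥ v`, the
condition `ψ ∘ M = ζ ψ` becomes `w ᵥ* M = ζ w`. The last two columns of this system force
`w₀ = (1 - ζ) w₂` and `(1 - ζ) w₁ = -2mζ w₂`, so since `ζ ≠ 1` the solutions form at most a
line, spanned by the coefficient vector of `ψ`; the first column holds for that vector exactly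
because of the quadratic relation.
-/

open Matrix Polynomial

theorem Matrix.dual_apply_mulVec_eq_smul_iff {R n : Type*} [CommSemiring R] [Fintype n]
    [DecidableEq n] (M : Matrix n n R) (φ : Module.Dual R (n → R)) (ζ : R) :
    (∀ v, φ (M *ᵥ v) = ζ * φ v) ↔
      (dotProductEquiv R n).symm φ ᵥ* M = ζ • (dotProductEquiv R n).symm φ := by
  obtain ⟨w, rfl⟩ := (dotProductEquiv R n).surjective φ
  simp_rw [LinearEquiv.symm_apply_apply, dotProductEquiv_apply_apply, dotProduct_mulVec,
    ← smul_eq_mul, ← smul_dotProduct]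
  exact ⟨dotProduct_eq _ _, fun h v => h ▸ rfl⟩

section RootsOfUnity

variable {K : Type*} [CommRing K] [IsDomain K] {ζ : K}

theorem IsPrimitiveRoot.sq_eq_neg_one_of_four (h : IsPrimitiveRoot ζ 4) : ζ ^ 2 = -1 :=
  (h.pow_of_dvd two_ne_zero (by norm_num)).eq_neg_one_of_two_right

theorem IsPrimitiveRoot.sq_sub_self_add_one_of_six [CharZero K] (h : IsPrimitiveRoot ζ 6) :
    ζ ^ 2 - ζ + 1 = 0 := by
  simpa using (isRoot_cyclotomic_iff_charZero (by norm_num)).mpr h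

end RootsOfUnity

theorem exp_two_pi_I_div_sq_add_sub_two_mul_add_one {m d : ℕ}
    (hmd : (m = 2 ∧ d = 4) ∨ (m = 1 ∧ d = 6)) :
    Complex.exp (2 * Real.pi * Complex.I / d) ^ 2
      + ((m : ℂ) - 2) * Complex.exp (2 * Real.pi * Complex.I / d) + 1 = 0 := by
  rcases hmd with ⟨rfl, rfl⟩ | ⟨rfl, rfl⟩
  · have h := (Complex.isPrimitiveRoot_exp 4 (by norm_num)).sq_eq_neg_one_of_four
    push_cast at h ⊢
    linear_combination h
  · have h := (Complex.isPrimitiveRoot_exp 6 (by norm_num)).sq_sub_self_add_one_of_six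
    push_cast at h ⊢
    linear_combination h

section K3

variable {K : Type*} [Field K] (m ζ : K)

-- The matrix of `ST_{O_X} ∘ (⊗ O_X(1))` in the basis `(1, H, [pt])` when `∫ H² = 2m`, and the
-- coefficients of the Gepner central charge in that basis.
def k3Matrix : Matrix (Fin 3) (Fin 3) K :=
  !![-(m + 1), -(2 * m), -1; 1, 1, 0; m, 2 * m, 1]

def gepnerCovector : Fin 3 → K :=
  ![ζ - 1, 2 * m * ζ / (1 - ζ), -1]

variable {m ζ}

theorem vec3_vecMul_k3Matrix (a b c : K) :
    ![a, b, c] ᵥ* k3Matrix m =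
      ![-(m + 1) * a + b + m * c, -(2 * m) * a + b + 2 * m * c, -a + c] := by
  rw [k3Matrix, cons_vecMul_cons, cons_vecMul_cons, cons_vecMul_cons, empty_vecMul, add_zero,
    smul_vec3, smul_vec3, smul_vec3, vec3_add, vec3_add]
  refine vec3_eq ?_ ?_ ?_ <;> simp only [smul_eq_mul] <;> ring

theorem gepnerCovector_vecMul_k3Matrix (hq : ζ ^ 2 + (m - 2) * ζ + 1 = 0) (hζ : ζ ≠ 1) :
    gepnerCovector m ζ ᵥ* k3Matrix m = ζ • gepnerCovector m ζ := by
  have hζ' : 1 - ζ ≠ 0 := sub_ne_zero.mpr hζ.symm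
  rw [gepnerCovector, vec3_vecMul_k3Matrix, smul_vec3, smul_eq_mul, smul_eq_mul, smul_eq_mul]
  refine vec3_eq ?_ ?_ ?_ <;> field_simp
  · linear_combination (1 + ζ) * hq
  · ring
  · ring

theorem eq_smul_gepnerCovector_of_vecMul_k3Matrix (hζ : ζ ≠ 1) {w : Fin 3 → K}
    (hw : w ᵥ* k3Matrix m = ζ • w) : w = (-w 2) • gepnerCovector m ζ := by
  have hζ' : 1 - ζ ≠ 0 := sub_ne_zero.mpr hζ.symm
  have hw_eta : w = ![w 0, w 1, w 2] := by ext i; fin_cases i <;> rfl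
  rw [hw_eta, vec3_vecMul_k3Matrix, smul_vec3, smul_eq_mul, smul_eq_mul, smul_eq_mul] at hw
  obtain ⟨-, h1, h2, -⟩ := by simpa only [vecCons_inj] using hw
  conv_lhs => rw [hw_eta]
  rw [gepnerCovector, smul_vec3, smul_eq_mul, smul_eq_mul, smul_eq_mul]
  refine vec3_eq ?_ ?_ ?_ <;> field_simp
  · linear_combination -h2
  · linear_combination h1 - 2 * m * h2

end K3

/-- The Gepner central charge on a K3 surface: for `(m,d) = (2,4)` or `(1,6)` and
`ζ = e^{2π√-1/d}`, the functional `ψ(c₀,c₁,c₂) = (ζ-1)c₀ + (2mζ/(1-ζ))c₁ - c₂` is,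
up to scalar, the unique eigenvector with eigenvalue `ζ` for the dual action of the
matrix `M` of `ST_{O_X} ∘ (⊗ O_X(1))`. -/
theorem stmt_7 (m d : ℕ) (hmd : (m = 2 ∧ d = 4) ∨ (m = 1 ∧ d = 6))
    (ζ : ℂ) (hζ : ζ = Complex.exp (2 * Real.pi * Complex.I / d))
    (M : Matrix (Fin 3) (Fin 3) ℂ)
    (hM : M = !![-((m : ℂ) + 1), -(2 * (m : ℂ)), -1; 1, 1, 0; (m : ℂ), 2 * (m : ℂ), 1])
    (ψ : (Fin 3 → ℂ) →ₗ[ℂ] ℂ)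
    (hψ : ∀ v : Fin 3 → ℂ,
      ψ v = (ζ - 1) * v 0 + (2 * (m : ℂ) * ζ / (1 - ζ)) * v 1 - v 2) :
    (∀ v : Fin 3 → ℂ, ψ (M.mulVec v) = ζ * ψ v) ∧
    (∀ ψ' : (Fin 3 → ℂ) →ₗ[ℂ] ℂ, (∀ v, ψ' (M.mulVec v) = ζ * ψ' v) →
      ∃ c : ℂ, ψ' = c • ψ) := by
  have hq : ζ ^ 2 + ((m : ℂ) - 2) * ζ + 1 = 0 :=
    hζ ▸ exp_two_pi_I_div_sq_add_sub_two_mul_add_one hmd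
  have hζ1 : ζ ≠ 1 := hζ ▸ (Complex.isPrimitiveRoot_exp d (by omega)).ne_one (by omega)
  have hMk : M = k3Matrix (m : ℂ) := hM
  have hψk : ψ = dotProductEquiv ℂ (Fin 3) (gepnerCovector m ζ) := by
    refine LinearMap.ext fun v => ?_
    rw [hψ, dotProductEquiv_apply_apply, gepnerCovector, vec3_dotProduct]
    simp only [cons_val_zero, cons_val_one, cons_val_two, tail_cons, head_cons]
    ring
  subst hMk hψk
  refine ⟨(dual_apply_mulVec_eq_smul_iff _ _ ζ).mpr ?_, fun ψ' h => ?_⟩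
  · rw [LinearEquiv.symm_apply_apply]
    exact gepnerCovector_vecMul_k3Matrix hq hζ1
  · rw [dual_apply_mulVec_eq_smul_iff] at h
    refine ⟨-(dotProductEquiv ℂ (Fin 3)).symm ψ' 2, ?_⟩
    rw [← map_smul, ← eq_smul_gepnerCovector_of_vecMul_k3Matrix hζ1 h,
      LinearEquiv.apply_symm_apply]
end

section
/- Let D be a triangulated category and D₁, …, D_N full triangulated subcategories such that: Hom(X, Y) = 0 whenever X ∈ D_i, Y ∈ D_j with i < j; and every object X of D admits a finite tower 0 = X₀ → X₁ → ⋯ → X_N = X of morphisms such that the cone of X_{i−1} → X_i lies in D_i for each i (a semiorthogonal decomposition D = ⟨D_N, …, D₂, D₁⟩). For each i, let C_i ⊆ D_i be the heart of a bounded t-structure on D_i, and suppose that Hom(A, B[k]) = 0 for all A ∈ C_j, B ∈ C_i and all integers k ≤ 0 whenever j > i. Then the extension closure ⟨C_1, …, C_N⟩_ex — the smallest full subcategory of D containing every C_i that is closed under extensions — is the heart of a bounded t-structure on D. -/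
open CategoryTheory Limits Pretriangulated

universe v u

variable {C : Type u} [Category.{v} C] [Preadditive C] [HasZeroObject C]
  [HasShift C ℤ] [∀ n : ℤ, (shiftFunctor C n).Additive] [Pretriangulated C]

/-- The extension closure of a class of objects `S`: the smallest class containing `S`
which is closed under isomorphisms and extensions (in distinguished triangles). -/
inductive ExtClosure (S : C → Prop) : C → Prop
  | of {X : C} : S X → ExtClosure S X
  | iso {X Y : C} : (X ≅ Y) → ExtClosure S X → ExtClosure S Y
  | ext (T : Triangle C) : (T ∈ distTriang C) → ExtClosure S T.obj₁ →
      ExtClosure S T.obj₃ → ExtClosure S T.obj₂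

/-- `D` is a (strictly) full triangulated subcategory: closed under isomorphisms,
contains the zero objects, closed under shifts and extensions. -/
structure IsTriangulatedSub (D : C → Prop) : Prop where
  iso : ∀ {X Y : C}, (X ≅ Y) → D X → D Y
  zero : ∀ X : C, IsZero X → D X
  shift : ∀ (X : C) (n : ℤ), D X → D (X⟦n⟧)
  ext : ∀ T : Triangle C, (T ∈ distTriang C) → D T.obj₁ → D T.obj₃ → D T.obj₂

/-- `P` is the heart of a bounded t-structure on the (triangulated sub)category `D`,
via the standard characterization: `P ⊆ D`, morphisms `A ⟶ B⟦k⟧` vanish for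
`A, B ∈ P` and `k < 0`, and every object of `D` admits a finite tower whose cones are
shifts `A⟦n᙮⟧` of objects `A ∈ P` with strictly decreasing shift degrees. -/
structure IsHeartOn (D P : C → Prop) : Prop where
  subset : ∀ X : C, P X → D X
  hom_neg : ∀ (A B : C) (k : ℤ), P A → P B → k < 0 → ∀ f : A ⟶ B⟦k⟧, f = 0
  filt : ∀ X : C, D X → ∃ (N : ℕ) (obj : Fin (N + 1) → C) (n : Fin N → ℤ),
    IsZero (obj 0) ∧ Nonempty (obj (Fin.last N) ≅ X) ∧ StrictAnti n ∧
    ∀ i : Fin N, ∃ (f : obj i.castSucc ⟶ obj i.succ) (Z : C)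
      (g : obj i.succ ⟶ Z) (h : Z ⟶ (obj i.castSucc)⟦(1 : ℤ)⟧),
      (Triangle.mk f g h ∈ distTriang C) ∧ ∃ A : C, P A ∧ Nonempty (Z ≅ A⟦n i⟧)

/-!
An object `X` is filtered by the semiorthogonal decomposition with cones `Z_i ∈ D_i`, and each
`Z_i` by the heart `C_i` with cones `A⟦n⟧`, `A ∈ C_i`. Going along the decomposition, the
filtration of `Z_i` is spliced on top of the one built from `C_j`, `j < i`, and each new piece
`B⟦n⟧`, `B ∈ C_i`, is pushed down to its place: past an earlier piece of lower degree the
extension splits, because `Hom(C_i, C_j⟦k⟧) = 0` for `j < i` and `k ≤ 0`, so the two pieces can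
be swapped; with an earlier piece of the same degree it is merged into one piece of
`⟨C_1, …, C_N⟩_ex`. The result has strictly decreasing degrees. Negative `Hom`s between objects
of `C_i` and `C_j` vanish by semiorthogonality, by the heart property or by hypothesis according
as `i < j`, `i = j` or `i > j`, and this passes to the extension closure.

The category is only pretriangulated, so the octahedra behind splicing, swapping and merging are
not available: each time, the cone of the relevant morphism is compared with the expected object
by a morphism of triangles, and the `Hom`-vanishing at hand makes the comparison an isomorphism.
-/

open Preadditive

section Shift

variable {𝒞 : Type*} [Category 𝒞] [Preadditive 𝒞] [HasShift 𝒞 ℤ]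
  [∀ n : ℤ, (shiftFunctor 𝒞 n).Additive]

lemma hom_eq_zero_of_iso_shift {A B : 𝒞} {k : ℤ} (h : ∀ f : B ⟶ A⟦k⟧, f = 0)
    {U V : 𝒞} {p q : ℤ} (eU : U ≅ B⟦p⟧) (eV : V ≅ A⟦q⟧) (hk : q - p = k) (f : U ⟶ V) :
    f = 0 := by
  let e : A⟦q⟧ ≅ (A⟦k⟧)⟦p⟧ := (shiftFunctorAdd' 𝒞 k p q (by omega)).app A
  have hf : eU.inv ≫ f ≫ eV.hom ≫ e.hom = 0 := by
    rw [← (shiftFunctor 𝒞 p).map_preimage (eU.inv ≫ f ≫ eV.hom ≫ e.hom),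
      h (Functor.preimage _ _), Functor.map_zero]
  simpa using eU.hom ≫= hf =≫ (e.inv ≫ eV.inv)

lemma shift_hom_shift_eq_zero {A A' : 𝒞} {p q : ℤ} (h : ∀ f : A ⟶ A'⟦q - p⟧, f = 0)
    (f : A⟦p⟧ ⟶ A'⟦q⟧) : f = 0 :=
  hom_eq_zero_of_iso_shift h (Iso.refl _) (Iso.refl _) rfl f

lemma shiftShift_hom_shift_eq_zero {A A' : 𝒞} {p s q : ℤ} (h : ∀ f : A ⟶ A'⟦q - (p + s)⟧, f = 0)
    (f : (A⟦p⟧)⟦s⟧ ⟶ A'⟦q⟧) : f = 0 :=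
  hom_eq_zero_of_iso_shift h ((shiftFunctorAdd' 𝒞 p s _ rfl).app A).symm (Iso.refl _) rfl f

lemma shift_hom_shiftShift_eq_zero {A A' : 𝒞} {p q t : ℤ} (h : ∀ f : A ⟶ A'⟦q + t - p⟧, f = 0)
    (f : A⟦p⟧ ⟶ (A'⟦q⟧)⟦t⟧) : f = 0 :=
  hom_eq_zero_of_iso_shift h (Iso.refl _) ((shiftFunctorAdd' 𝒞 q t _ rfl).app A').symm rfl f

lemma shiftShift_hom_eq_zero {A V : 𝒞} {p s : ℤ} (h : ∀ f : A ⟶ V⟦-(p + s)⟧, f = 0)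
    (f : (A⟦p⟧)⟦s⟧ ⟶ V) : f = 0 :=
  hom_eq_zero_of_iso_shift h ((shiftFunctorAdd' 𝒞 p s _ rfl).app A).symm
    ((shiftFunctorZero 𝒞 ℤ).app V).symm (by omega) f

end Shift

lemma distTriang_of_iso₃ {X₁ X₂ X₃ Y : C} {f : X₁ ⟶ X₂} {g : X₂ ⟶ X₃}
    {h : X₃ ⟶ X₁⟦(1 : ℤ)⟧} (hT : Triangle.mk f g h ∈ distTriang C) (e : X₃ ≅ Y) :
    Triangle.mk f (g ≫ e.hom) (e.inv ≫ h) ∈ distTriang C :=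
  isomorphic_distinguished _ hT _ <| Triangle.isoMk _ _ (Iso.refl _) (Iso.refl _) e.symm
    (by simp [Triangle.mk]) (by simp [Triangle.mk]) (by simp [Triangle.mk])

lemma isIso_of_comp_eq_id_of_cancel {𝒞 : Type*} [Category 𝒞] [Preadditive 𝒞] {X Y : 𝒞}
    {c : X ⟶ Y} {d : Y ⟶ X} (hcd : c ≫ d = 𝟙 X) (hcancel : ∀ φ : Y ⟶ Y, c ≫ φ = 0 → φ = 0) :
    IsIso c :=
  ⟨d, hcd, sub_eq_zero.mp <| hcancel _ <| by simp [comp_sub, reassoc_of% hcd]⟩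

namespace ExtClosure

variable {S : C → Prop}

lemma mono {S' : C → Prop} (h : ∀ X, S X → S' X) {X : C} (hX : ExtClosure S X) :
    ExtClosure S' X := by
  induction hX with
  | of hX => exact of (h _ hX)
  | iso e _ ih => exact iso e ih
  | ext T hT _ _ ih₁ ih₃ => exact ext T hT ih₁ ih₃

lemma hom_eq_zero_left {V : C} (h : ∀ A, S A → ∀ f : A ⟶ V, f = 0) {A : C}
    (hA : ExtClosure S A) (f : A ⟶ V) : f = 0 := by
  induction hA with
  | of hA => exact h _ hA f
  | iso e _ ih => rw [← e.inv_hom_id_assoc f, ih (e.hom ≫ f), comp_zero]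
  | ext T hT _ _ ih₁ ih₃ =>
    obtain ⟨g, rfl⟩ := Triangle.yoneda_exact₂ T hT f (ih₁ _)
    rw [ih₃ g, comp_zero]

lemma hom_shift_eq_zero_right {B : C} {k : ℤ} (h : ∀ A, S A → ∀ f : B ⟶ A⟦k⟧, f = 0)
    {A : C} (hA : ExtClosure S A) (f : B ⟶ A⟦k⟧) : f = 0 := by
  induction hA with
  | of hA => exact h _ hA f
  | iso e _ ih =>
    rw [← Category.comp_id f, ← ((shiftFunctor C k).mapIso e).inv_hom_id, ← Category.assoc,
      ih (f ≫ _), zero_comp]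
  | ext T hT _ _ ih₁ ih₃ =>
    have hTk := Triangle.shift_distinguished T hT k
    obtain ⟨g, rfl⟩ := Triangle.coyoneda_exact₂ _ hTk f <| by
      change f ≫ (k.negOnePow • T.mor₂⟦k⟧') = 0
      rw [Linear.comp_units_smul, ih₃ (f ≫ T.mor₂⟦k⟧'), smul_zero]
    exact (ih₁ g).symm ▸ zero_comp

lemma hom_shift_eq_zero {k : ℤ} (h : ∀ A B, S A → S B → ∀ f : A ⟶ B⟦k⟧, f = 0) {A B : C}
    (hA : ExtClosure S A) (hB : ExtClosure S B) (f : A ⟶ B⟦k⟧) : f = 0 :=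
  hom_eq_zero_left (fun _ hA' => hom_shift_eq_zero_right (fun _ hB' => h _ _ hA' hB') hB) hA f

lemma shift_neg_of_distTriang {A B V : C} {n : ℤ} {f : A⟦n⟧ ⟶ V} {g : V ⟶ B⟦n⟧}
    {h : B⟦n⟧ ⟶ (A⟦n⟧)⟦(1 : ℤ)⟧} (hT : Triangle.mk f g h ∈ distTriang C)
    (hA : ExtClosure S A) (hB : ExtClosure S B) : ExtClosure S (V⟦-n⟧) :=
  ext _ (Triangle.shift_distinguished _ hT (-n)) (iso (shiftShiftNeg A n).symm hA)
    (iso (shiftShiftNeg B n).symm hB)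

end ExtClosure

/-- `Tower Q b X` is a filtration `0 = X₀ ⟶ ⋯ ⟶ Xₙ = X` whose cones are `A⟦m⟧` with `Q m A`,
recorded from the top: the degrees `m` decrease strictly along the filtration and are `≥ b`. -/
inductive Tower (Q : ℤ → C → Prop) : ℤ → C → Prop
  | zero (b : ℤ) {X : C} (hX : IsZero X) : Tower Q b X
  | step {X' X A : C} {m b : ℤ} (hb : b ≤ m) (hX' : Tower Q (m + 1) X')
      (f : X' ⟶ X) (g : X ⟶ A⟦m⟧) (h : A⟦m⟧ ⟶ X'⟦(1 : ℤ)⟧)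
      (hT : Triangle.mk f g h ∈ distTriang C) (hA : Q m A) : Tower Q b X

namespace Tower

variable {Q : ℤ → C → Prop} {b : ℤ} {X : C}

lemma of_le {b' : ℤ} (hb : b' ≤ b) (hX : Tower Q b X) : Tower Q b' X := by
  cases hX with
  | zero _ hX => exact zero _ hX
  | step hm hX' f g h hT hA => exact step (hb.trans hm) hX' f g h hT hA

lemma mono {Q' : ℤ → C → Prop} (hQ : ∀ m A, Q m A → Q' m A) (hX : Tower Q b X) :
    Tower Q' b X := by
  induction hX with
  | zero _ hX => exact zero _ hX
  | step hm _ f g h hT hA ih => exact step hm ih f g h hT (hQ _ _ hA)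

lemma of_iso {Y : C} (e : X ≅ Y) (hX : Tower Q b X) : Tower Q b Y := by
  cases hX with
  | zero _ hX => exact zero _ (hX.of_iso e.symm)
  | step hm hX' f g h hT hA =>
    refine step hm hX' (f ≫ e.hom) (e.inv ≫ g) h ?_ hA
    exact isomorphic_distinguished _ hT _ <| Triangle.isoMk _ _ (Iso.refl _) e.symm
      (Iso.refl _) (by simp [Triangle.mk]) (by simp [Triangle.mk]) (by simp [Triangle.mk])

lemma prop_of_isTriangulatedSub {D : C → Prop} (hD : IsTriangulatedSub D)
    (hQ : ∀ m A, Q m A → D A) (hX : Tower Q b X) : D X := by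
  induction hX with
  | zero _ hX => exact hD.zero _ hX
  | step _ _ _ _ _ hT hA ih => exact hD.ext _ hT ih (hD.shift _ _ (hQ _ _ hA))

lemma hom_shift_eq_zero (hX : Tower Q b X) {V : C} {s : ℤ}
    (hV : ∀ m A, Q m A → b ≤ m → ∀ f : (A⟦m⟧)⟦s⟧ ⟶ V, f = 0) (f : X⟦s⟧ ⟶ V) : f = 0 := by
  induction hX with
  | zero _ hX => exact ((shiftFunctor C s).map_isZero hX).eq_of_src f 0
  | step hm _ f₀ g₀ h₀ hT hA ih =>
    obtain ⟨g, rfl⟩ := Triangle.yoneda_exact₂ _ (Triangle.shift_distinguished _ hT s) f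
      (ih (fun m' A' hA' hm' => hV m' A' hA' (by omega)) _)
    exact (hV _ _ hA hm g).symm ▸ comp_zero

end Tower

def HasShiftedCone (S : C → Prop) (n : ℤ) (X₁ X₂ : C) : Prop :=
  ∃ (f : X₁ ⟶ X₂) (Z : C) (g : X₂ ⟶ Z) (h : Z ⟶ X₁⟦(1 : ℤ)⟧),
    (Triangle.mk f g h ∈ distTriang C) ∧ ∃ A : C, S A ∧ Nonempty (Z ≅ A⟦n⟧)

/-- The filtrations of `IsHeartOn.filt`. -/
def IsShiftedFiltration (S : C → Prop) (X : C) {N : ℕ} (obj : Fin (N + 1) → C) (n : Fin N → ℤ) :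
    Prop :=
  IsZero (obj 0) ∧ Nonempty (obj (Fin.last N) ≅ X) ∧ StrictAnti n ∧
    ∀ i : Fin N, HasShiftedCone S (n i) (obj i.castSucc) (obj i.succ)

lemma HasShiftedCone.of_iso {S : C → Prop} {n : ℤ} {X₁ X₂ Y₁ Y₂ : C}
    (h : HasShiftedCone S n X₁ X₂) (e₁ : X₁ ≅ Y₁) (e₂ : X₂ ≅ Y₂) :
    HasShiftedCone S n Y₁ Y₂ := by
  obtain ⟨f, Z, g, h, hT, hA⟩ := h
  refine ⟨e₁.inv ≫ f ≫ e₂.hom, Z, e₂.inv ≫ g, h ≫ e₁.hom⟦(1 : ℤ)⟧', ?_, hA⟩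
  refine isomorphic_distinguished _ hT _ <| Triangle.isoMk _ _ e₁.symm e₂.symm (Iso.refl _)
    (by simp [Triangle.mk]) (by simp [Triangle.mk]) ?_
  simp [Triangle.mk, ← Functor.map_comp]

lemma Tower.of_isShiftedFiltration {S : C → Prop} {N : ℕ} {X : C} {obj : Fin (N + 1) → C}
    {n : Fin N → ℤ} (hX : IsShiftedFiltration S X obj n) {b : ℤ} (hb : ∀ i, b ≤ n i) :
    Tower (fun _ => S) b X := by
  induction N generalizing X b with
  | zero => exact .of_iso hX.2.1.some (.zero b hX.1)
  | succ N ih =>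
    obtain ⟨hzero, ⟨eX⟩, hn, hsteps⟩ := hX
    obtain ⟨f, Z, g, h, hT, A, hA, ⟨e⟩⟩ := hsteps (Fin.last N)
    have hrest : IsShiftedFiltration S (obj (Fin.last N).castSucc) (fun i => obj i.castSucc)
        (fun i => n i.castSucc) :=
      ⟨hzero, ⟨Iso.refl _⟩, hn.comp_strictMono (Fin.strictMono_castSucc),
        fun i => hsteps i.castSucc⟩
    have hlow := ih hrest (b := n (Fin.last N) + 1)
      (fun i => hn (Fin.castSucc_lt_last i))
    exact .of_iso eX (.step (hb _) hlow f (g ≫ e.hom) (e.inv ≫ h)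
      (distTriang_of_iso₃ hT e) hA)

lemma strictAnti_snoc {N : ℕ} {n : Fin N → ℤ} {m : ℤ} (hn : StrictAnti n)
    (hm : ∀ i, m < n i) : StrictAnti (Fin.snoc n m : Fin (N + 1) → ℤ) := by
  intro a c hac
  induction c using Fin.lastCases with
  | last =>
    induction a using Fin.lastCases with
    | last => exact absurd hac (lt_irrefl _)
    | cast a => simpa using hm a
  | cast c =>
    induction a using Fin.lastCases with
    | last => exact absurd hac (not_lt.2 (Fin.le_last _))
    | cast a => simpa using hn (Fin.castSucc_lt_castSucc_iff.mp hac)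

lemma Tower.exists_isShiftedFiltration {S : C → Prop} {b : ℤ} {X : C}
    (hX : Tower (fun _ => S) b X) : ∃ (N : ℕ) (obj : Fin (N + 1) → C) (n : Fin N → ℤ),
      IsShiftedFiltration S X obj n ∧ ∀ i, b ≤ n i := by
  induction hX with
  | zero b hX =>
    exact ⟨0, fun _ => _, Fin.elim0, ⟨hX, ⟨Iso.refl _⟩, fun a => a.elim0, fun i => i.elim0⟩,
      fun i => i.elim0⟩
  | @step X' X A m b hm _ f g h hT hA ih =>
    obtain ⟨N, obj, n, ⟨hzero, ⟨e⟩, hn, hsteps⟩, hbound⟩ := ih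
    have hmn : ∀ i, m < n i := fun i => by have := hbound i; omega
    refine ⟨N + 1, Fin.snoc obj X, Fin.snoc n m, ⟨?_, ⟨eqToIso (Fin.snoc_last ..)⟩,
      strictAnti_snoc hn hmn, fun i => ?_⟩, fun i => ?_⟩
    · rw [show (0 : Fin (N + 2)) = Fin.castSucc 0 from rfl, Fin.snoc_castSucc]
      exact hzero
    · induction i using Fin.lastCases with
      | last =>
        simp only [Fin.succ_last, Fin.snoc_last, Fin.snoc_castSucc]
        exact HasShiftedCone.of_iso ⟨f, _, g, h, hT, A, hA, ⟨Iso.refl _⟩⟩ e.symm (Iso.refl _)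
      | cast i =>
        rw [Fin.succ_castSucc]
        simpa only [Fin.snoc_castSucc] using hsteps i
    · induction i using Fin.lastCases with
      | last => simpa using hm
      | cast i => simpa using (hmn i).le.trans' hm

section Splice

variable {P Y₁ Y₂ Z₁ Z₂ B Q : C}
  {p₁ : P ⟶ Y₁} {r₁ : Y₁ ⟶ Z₁} {θ₁ : Z₁ ⟶ P⟦(1 : ℤ)⟧}
  {p₂ : P ⟶ Y₂} {r₂ : Y₂ ⟶ Z₂} {θ₂ : Z₂ ⟶ P⟦(1 : ℤ)⟧}
  {z : Z₁ ⟶ Z₂} {q : Z₂ ⟶ B} {κ : B ⟶ Z₁⟦(1 : ℤ)⟧}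
  {y : Y₁ ⟶ Y₂} {π : Y₂ ⟶ Q} {σ : Q ⟶ Y₁⟦(1 : ℤ)⟧} {c : Q ⟶ B}
  (hTa : Triangle.mk p₁ r₁ θ₁ ∈ distTriang C) (hTb : Triangle.mk p₂ r₂ θ₂ ∈ distTriang C)
  (hTz : Triangle.mk z q κ ∈ distTriang C) (hTy : Triangle.mk y π σ ∈ distTriang C)
  (sq₁ : p₁ ≫ y = p₂) (sq₂ : y ≫ r₂ = r₁ ≫ z)
  (hc₁ : π ≫ c = r₂ ≫ q) (hc₂ : σ ≫ r₁⟦(1 : ℤ)⟧' = c ≫ κ)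

include hTa hTb hTy sq₁ hc₂ in
lemma splice_hom_eq_zero (hPB : ∀ f : P⟦(1 : ℤ)⟧ ⟶ B, f = 0)
    (hPZ₂ : ∀ f : P⟦(1 : ℤ)⟧ ⟶ Z₂, f = 0) (x : P⟦(1 : ℤ)⟧ ⟶ Q) : x = 0 := by
  have hxσ : x ≫ σ = 0 := by
    obtain ⟨ξ, hξ⟩ : ∃ ξ : P⟦(1 : ℤ)⟧ ⟶ P⟦(1 : ℤ)⟧, x ≫ σ = ξ ≫ (-(p₁⟦(1 : ℤ)⟧')) :=
      Triangle.coyoneda_exact₂ _ (rot_of_distTriang _ (rot_of_distTriang _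
        (rot_of_distTriang _ hTa))) (x ≫ σ) (by
          change (x ≫ σ) ≫ (-(r₁⟦(1 : ℤ)⟧')) = 0
          rw [comp_neg, Category.assoc, hc₂, ← Category.assoc, hPB (x ≫ c), zero_comp,
            neg_zero])
    have hξp₂ : ξ ≫ p₂⟦(1 : ℤ)⟧' = 0 := by
      have hσy : σ ≫ y⟦(1 : ℤ)⟧' = 0 := comp_distTriang_mor_zero₃₁ _ hTy
      have h : (x ≫ σ) ≫ y⟦(1 : ℤ)⟧' = 0 := by rw [Category.assoc, hσy, comp_zero]
      rwa [hξ, comp_neg, neg_comp, neg_eq_zero, Category.assoc, ← Functor.map_comp, sq₁] at h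
    obtain ⟨ϑ, rfl⟩ : ∃ ϑ : P⟦(1 : ℤ)⟧ ⟶ Z₂, ξ = ϑ ≫ θ₂ :=
      Triangle.coyoneda_exact₂ _ (rot_of_distTriang _ (rot_of_distTriang _ hTb)) ξ (by
        change ξ ≫ (-(p₂⟦(1 : ℤ)⟧')) = 0
        rw [comp_neg, hξp₂, neg_zero])
    rw [hξ, hPZ₂ ϑ, zero_comp, zero_comp]
  obtain ⟨w, rfl⟩ : ∃ w : P⟦(1 : ℤ)⟧ ⟶ Y₂, x = w ≫ π :=
    Triangle.coyoneda_exact₂ _ (rot_of_distTriang _ hTy) x hxσ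
  obtain ⟨χ, rfl⟩ : ∃ χ : P⟦(1 : ℤ)⟧ ⟶ P, w = χ ≫ p₂ :=
    Triangle.coyoneda_exact₂ _ hTb w (hPZ₂ _)
  have hyπ : y ≫ π = 0 := comp_distTriang_mor_zero₁₂ _ hTy
  rw [← sq₁, Category.assoc, Category.assoc, hyπ, comp_zero, comp_zero]

include hTa hTb hTz hTy sq₁ sq₂ hc₁ hc₂ in
lemma splice_exists_factor {V : C} (hV : ∀ f : P⟦(1 : ℤ)⟧ ⟶ V, f = 0) (ψ : Q ⟶ V) :
    ∃ φ : B ⟶ V, ψ = c ≫ φ := by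
  have hyπ : y ≫ π = 0 := comp_distTriang_mor_zero₁₂ _ hTy
  obtain ⟨w, hw⟩ : ∃ w : Z₂ ⟶ V, π ≫ ψ = r₂ ≫ w :=
    Triangle.yoneda_exact₂ _ hTb (π ≫ ψ) (by
      change p₂ ≫ π ≫ ψ = 0
      rw [← sq₁, Category.assoc, reassoc_of% hyπ, zero_comp, comp_zero])
  have hzw : z ≫ w = 0 := by
    obtain ⟨e, he⟩ : ∃ e : P⟦(1 : ℤ)⟧ ⟶ V, z ≫ w = θ₁ ≫ e :=
      Triangle.yoneda_exact₃ _ hTa (z ≫ w) (by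
      change r₁ ≫ z ≫ w = 0
      rw [← Category.assoc, ← sq₂, Category.assoc, ← hw, reassoc_of% hyπ, zero_comp])
    rw [he, hV e, comp_zero]
  obtain ⟨φ, rfl⟩ : ∃ φ : B ⟶ V, w = q ≫ φ := Triangle.yoneda_exact₂ _ hTz w hzw
  obtain ⟨e, he⟩ : ∃ e : Y₁⟦(1 : ℤ)⟧ ⟶ V, ψ - c ≫ φ = σ ≫ e :=
    Triangle.yoneda_exact₃ _ hTy (ψ - c ≫ φ) (by
      change π ≫ (ψ - c ≫ φ) = 0
      rw [comp_sub, reassoc_of% hc₁, hw, sub_self])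
  obtain ⟨e', rfl⟩ : ∃ e' : Z₁⟦(1 : ℤ)⟧ ⟶ V, e = (-(r₁⟦(1 : ℤ)⟧')) ≫ e' :=
    Triangle.yoneda_exact₂ _ (rot_of_distTriang _ (rot_of_distTriang _
      (rot_of_distTriang _ hTa))) e (by
        change (-(p₁⟦(1 : ℤ)⟧')) ≫ e = 0
        rw [neg_comp, hV (p₁⟦(1 : ℤ)⟧' ≫ e), neg_zero])
  refine ⟨φ - κ ≫ e', ?_⟩
  rw [sub_eq_iff_eq_add'] at he
  rw [he, neg_comp, comp_neg, ← Category.assoc σ, hc₂, comp_sub, Category.assoc,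
    sub_eq_add_neg]

include hTb hTz hc₁ in
lemma splice_cancel (hPB : ∀ f : P⟦(1 : ℤ)⟧ ⟶ B, f = 0) (hZB : ∀ f : Z₁⟦(1 : ℤ)⟧ ⟶ B, f = 0)
    (φ : B ⟶ B) (hφ : c ≫ φ = 0) : φ = 0 := by
  obtain ⟨e, he⟩ : ∃ e : P⟦(1 : ℤ)⟧ ⟶ B, q ≫ φ = θ₂ ≫ e :=
    Triangle.yoneda_exact₃ _ hTb (q ≫ φ) (by
      change r₂ ≫ q ≫ φ = 0
      rw [← Category.assoc, ← hc₁, Category.assoc, hφ, comp_zero])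
  obtain ⟨e', rfl⟩ : ∃ e' : Z₁⟦(1 : ℤ)⟧ ⟶ B, φ = κ ≫ e' := Triangle.yoneda_exact₃ _ hTz φ (by
    change q ≫ φ = 0
    rw [he, hPB e, comp_zero])
  rw [hZB e', comp_zero]

end Splice

lemma exists_distTriang_of_splice {P Y₁ Y₂ Z₁ Z₂ B : C}
    {p₁ : P ⟶ Y₁} {r₁ : Y₁ ⟶ Z₁} {θ₁ : Z₁ ⟶ P⟦(1 : ℤ)⟧}
    {p₂ : P ⟶ Y₂} {r₂ : Y₂ ⟶ Z₂} {θ₂ : Z₂ ⟶ P⟦(1 : ℤ)⟧}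
    {z : Z₁ ⟶ Z₂} {q : Z₂ ⟶ B} {κ : B ⟶ Z₁⟦(1 : ℤ)⟧} {y : Y₁ ⟶ Y₂}
    (hTa : Triangle.mk p₁ r₁ θ₁ ∈ distTriang C) (hTb : Triangle.mk p₂ r₂ θ₂ ∈ distTriang C)
    (hTz : Triangle.mk z q κ ∈ distTriang C) (sq₁ : p₁ ≫ y = p₂) (sq₂ : y ≫ r₂ = r₁ ≫ z)
    (hPB : ∀ f : P⟦(1 : ℤ)⟧ ⟶ B, f = 0) (hPZ₂ : ∀ f : P⟦(1 : ℤ)⟧ ⟶ Z₂, f = 0)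
    (hZB : ∀ f : Z₁⟦(1 : ℤ)⟧ ⟶ B, f = 0) :
    ∃ (g : Y₂ ⟶ B) (h : B ⟶ Y₁⟦(1 : ℤ)⟧), Triangle.mk y g h ∈ distTriang C := by
  obtain ⟨Q, π, σ, hTy⟩ := distinguished_cocone_triangle y
  obtain ⟨c, hc₁, hc₂⟩ : ∃ c : Q ⟶ B, π ≫ c = r₂ ≫ q ∧ σ ≫ r₁⟦(1 : ℤ)⟧' = c ≫ κ :=
    complete_distinguished_triangle_morphism _ _ hTy hTz r₁ r₂ sq₂
  obtain ⟨d, hd⟩ := splice_exists_factor hTa hTb hTz hTy sq₁ sq₂ hc₁ hc₂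
    (splice_hom_eq_zero hTa hTb hTy sq₁ hc₂ hPB hPZ₂) (𝟙 Q)
  have : IsIso c := isIso_of_comp_eq_id_of_cancel hd.symm (splice_cancel hTb hTz hc₁ hPB hZB)
  exact ⟨_, _, distTriang_of_iso₃ hTy (asIso c)⟩

section Swap

variable {W X' X A B W' Q : C}
  {a : W ⟶ X'} {g : X' ⟶ A} {h : A ⟶ W⟦(1 : ℤ)⟧}
  {u : X' ⟶ X} {v : X ⟶ B} {δ : B ⟶ X'⟦(1 : ℤ)⟧}
  {ι : W' ⟶ X} {g' : X ⟶ A} {η : A ⟶ W'⟦(1 : ℤ)⟧}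
  {w : W ⟶ W'} {π : W' ⟶ Q} {σ : Q ⟶ W⟦(1 : ℤ)⟧} {c : Q ⟶ B}
  (hT₁ : Triangle.mk a g h ∈ distTriang C) (hT₂ : Triangle.mk u v δ ∈ distTriang C)
  (hT₃ : Triangle.mk ι g' η ∈ distTriang C) (hTw : Triangle.mk w π σ ∈ distTriang C)
  (hg : g = u ≫ g') (hw₁ : a ≫ u = w ≫ ι) (hw₃ : h ≫ w⟦(1 : ℤ)⟧' = η)
  (hc₁ : π ≫ c = ι ≫ v) (hc₂ : σ ≫ a⟦(1 : ℤ)⟧' = c ≫ δ)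

include hT₁ hT₂ hT₃ hTw hg hw₁ hw₃ hc₁ hc₂ in
lemma swap_hom_eq_zero (hAB : ∀ f : A ⟶ B, f = 0) (hAA : ∀ f : A ⟶ A⟦(-1 : ℤ)⟧, f = 0)
    (x : A ⟶ Q) : x = 0 := by
  have hxσ : x ≫ σ = 0 := by
    obtain ⟨ξ, hξ⟩ : ∃ ξ : A ⟶ A, x ≫ σ = ξ ≫ h :=
      Triangle.coyoneda_exact₂ _ (rot_of_distTriang _ (rot_of_distTriang _ hT₁)) (x ≫ σ) (by
        change (x ≫ σ) ≫ (-(a⟦(1 : ℤ)⟧')) = 0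
        rw [comp_neg, Category.assoc, hc₂, ← Category.assoc, hAB (x ≫ c), zero_comp, neg_zero])
    have hξη : ξ ≫ η = 0 := by
      have hσw : σ ≫ w⟦(1 : ℤ)⟧' = 0 := comp_distTriang_mor_zero₃₁ _ hTw
      rw [← hw₃, ← Category.assoc, ← hξ, Category.assoc, hσw, comp_zero]
    obtain ⟨ϑ, rfl⟩ : ∃ ϑ : A ⟶ X, ξ = ϑ ≫ g' :=
      Triangle.coyoneda_exact₂ _ (rot_of_distTriang _ hT₃) ξ hξη
    obtain ⟨χ, rfl⟩ : ∃ χ : A ⟶ X', ϑ = χ ≫ u := Triangle.coyoneda_exact₂ _ hT₂ ϑ (hAB _)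
    have hgh : g ≫ h = 0 := comp_distTriang_mor_zero₂₃ _ hT₁
    rw [hξ, Category.assoc, Category.assoc, ← reassoc_of% hg, hgh, comp_zero]
  obtain ⟨y, rfl⟩ : ∃ y : A ⟶ W', x = y ≫ π :=
    Triangle.coyoneda_exact₂ _ (rot_of_distTriang _ hTw) x hxσ
  obtain ⟨χ, hχ⟩ : ∃ χ : A ⟶ X', y ≫ ι = χ ≫ u :=
    Triangle.coyoneda_exact₂ _ hT₂ (y ≫ ι) (by
      change (y ≫ ι) ≫ v = 0
      rw [Category.assoc, ← hc₁, ← Category.assoc]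
      exact hAB _)
  obtain ⟨θ, rfl⟩ : ∃ θ : A ⟶ W, χ = θ ≫ a :=
    Triangle.coyoneda_exact₂ _ hT₁ χ (by
      have hιg' : ι ≫ g' = 0 := comp_distTriang_mor_zero₁₂ _ hT₃
      change χ ≫ g = 0
      rw [hg, ← Category.assoc, ← hχ, Category.assoc, hιg', comp_zero])
  obtain ⟨ζ, hζ⟩ : ∃ ζ : A ⟶ A⟦(-1 : ℤ)⟧,
      θ ≫ w - y = ζ ≫ (Triangle.mk ι g' η).invRotate.mor₁ :=
    Triangle.coyoneda_exact₂ _ (inv_rot_of_distTriang _ hT₃) (θ ≫ w - y) (by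
      change (θ ≫ w - y) ≫ ι = 0
      rw [sub_comp, Category.assoc, ← hw₁, hχ, Category.assoc, sub_self])
  have hy : y = θ ≫ w := by
    rw [eq_comm, ← sub_eq_zero, hζ, hAA ζ]
    exact zero_comp
  have hwπ : w ≫ π = 0 := comp_distTriang_mor_zero₁₂ _ hTw
  rw [hy, Category.assoc, hwπ, comp_zero]


include hT₁ hT₂ hT₃ hTw hw₁ hw₃ hc₁ hc₂ in
lemma swap_exists_factor {V : C} (hV : ∀ f : A ⟶ V, f = 0) (ψ : Q ⟶ V) :
    ∃ φ : B ⟶ V, ψ = c ≫ φ := by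
  have hwπ : w ≫ π = 0 := comp_distTriang_mor_zero₁₂ _ hTw
  obtain ⟨k, hk⟩ : ∃ k : X ⟶ V, π ≫ ψ = ι ≫ k :=
    Triangle.yoneda_exact₂ _ (inv_rot_of_distTriang _ hT₃) (π ≫ ψ) (by
      change (-(η⟦(-1 : ℤ)⟧') ≫ (shiftFunctorCompIsoId C (1 : ℤ) (-1) (by omega)).hom.app W')
        ≫ π ≫ ψ = 0
      rw [← hw₃, Functor.map_comp, neg_comp, Category.assoc, Category.assoc]
      erw [(shiftFunctorCompIsoId C (1 : ℤ) (-1) (by omega)).hom.naturality_assoc w]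
      rw [Functor.id_map, reassoc_of% hwπ, zero_comp, comp_zero, comp_zero, neg_zero])
  have huk : u ≫ k = 0 := by
    obtain ⟨e, he⟩ : ∃ e : A ⟶ V, u ≫ k = g ≫ e :=
      Triangle.yoneda_exact₂ _ hT₁ (u ≫ k) (by
        change a ≫ u ≫ k = 0
        rw [reassoc_of% hw₁, ← hk, reassoc_of% hwπ, zero_comp])
    rw [he, hV e, comp_zero]
  obtain ⟨φ, rfl⟩ : ∃ φ : B ⟶ V, k = v ≫ φ := Triangle.yoneda_exact₂ _ hT₂ k huk
  obtain ⟨e, he⟩ : ∃ e : W⟦(1 : ℤ)⟧ ⟶ V, ψ - c ≫ φ = σ ≫ e :=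
    Triangle.yoneda_exact₃ _ hTw _ (by
      change π ≫ (ψ - c ≫ φ) = 0
      rw [comp_sub, reassoc_of% hc₁, hk, sub_self])
  obtain ⟨e', rfl⟩ : ∃ e' : X'⟦(1 : ℤ)⟧ ⟶ V, e = (-(a⟦(1 : ℤ)⟧')) ≫ e' :=
    Triangle.yoneda_exact₂ _ (rot_of_distTriang _ (rot_of_distTriang _ hT₁)) e (hV _)
  refine ⟨φ - δ ≫ e', ?_⟩
  rw [sub_eq_iff_eq_add'] at he
  rw [he, neg_comp, comp_neg, ← Category.assoc σ, hc₂, comp_sub, Category.assoc,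
    sub_eq_add_neg]

include hT₁ hT₂ hT₃ hc₁ in
lemma swap_cancel (hAB : ∀ f : A ⟶ B, f = 0) (hAB₁ : ∀ f : A⟦(1 : ℤ)⟧ ⟶ B, f = 0)
    (hWB : ∀ f : W⟦(1 : ℤ)⟧ ⟶ B, f = 0) (φ : B ⟶ B) (hφ : c ≫ φ = 0) : φ = 0 := by
  obtain ⟨e, he⟩ : ∃ e : A ⟶ B, v ≫ φ = g' ≫ e :=
    Triangle.yoneda_exact₂ _ hT₃ (v ≫ φ) (by
      change ι ≫ v ≫ φ = 0
      rw [← Category.assoc, ← hc₁, Category.assoc, hφ, comp_zero])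
  obtain ⟨e', rfl⟩ : ∃ e' : X'⟦(1 : ℤ)⟧ ⟶ B, φ = δ ≫ e' :=
    Triangle.yoneda_exact₃ _ hT₂ φ (by
      change v ≫ φ = 0
      rw [he, hAB e, comp_zero])
  obtain ⟨e'', rfl⟩ : ∃ e'' : A⟦(1 : ℤ)⟧ ⟶ B, e' = (-(g⟦(1 : ℤ)⟧')) ≫ e'' :=
    Triangle.yoneda_exact₂ _ (rot_of_distTriang _ (rot_of_distTriang _
      (rot_of_distTriang _ hT₁))) e' (by
        change (-(a⟦(1 : ℤ)⟧')) ≫ e' = 0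
        rw [neg_comp, hWB (a⟦(1 : ℤ)⟧' ≫ e'), neg_zero])
  rw [hAB₁ e'', comp_zero, comp_zero]

end Swap

lemma exists_distTriang_of_swap {W X' X A B : C}
    {a : W ⟶ X'} {g : X' ⟶ A} {h : A ⟶ W⟦(1 : ℤ)⟧}
    {u : X' ⟶ X} {v : X ⟶ B} {δ : B ⟶ X'⟦(1 : ℤ)⟧}
    (hT₁ : Triangle.mk a g h ∈ distTriang C) (hT₂ : Triangle.mk u v δ ∈ distTriang C)
    (hAB : ∀ f : A ⟶ B, f = 0) (hAB₁ : ∀ f : A⟦(1 : ℤ)⟧ ⟶ B, f = 0)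
    (hBA : ∀ f : B⟦(-1 : ℤ)⟧ ⟶ A, f = 0) (hAA : ∀ f : A ⟶ A⟦(-1 : ℤ)⟧, f = 0)
    (hWB : ∀ f : W⟦(1 : ℤ)⟧ ⟶ B, f = 0) :
    ∃ (W' : C) (f₁ : W ⟶ W') (g₁ : W' ⟶ B) (h₁ : B ⟶ W⟦(1 : ℤ)⟧)
      (f₂ : W' ⟶ X) (g₂ : X ⟶ A) (h₂ : A ⟶ W'⟦(1 : ℤ)⟧),
      Triangle.mk f₁ g₁ h₁ ∈ distTriang C ∧ Triangle.mk f₂ g₂ h₂ ∈ distTriang C := by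
  obtain ⟨g', hg⟩ : ∃ g' : X ⟶ A, g = u ≫ g' :=
    Triangle.yoneda_exact₂ _ (inv_rot_of_distTriang _ hT₂) g (hBA _)
  obtain ⟨W', ι, η, hT₃⟩ := distinguished_cocone_triangle₁ g'
  obtain ⟨w, hw₁, hw₃⟩ : ∃ w : W ⟶ W', a ≫ u = w ≫ ι ∧ h ≫ w⟦(1 : ℤ)⟧' = 𝟙 A ≫ η :=
    complete_distinguished_triangle_morphism₁ _ _ hT₁ hT₃ u (𝟙 A) (by
      rw [hg]
      exact Category.comp_id _)
  rw [Category.id_comp] at hw₃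
  obtain ⟨Q, π, σ, hTw⟩ := distinguished_cocone_triangle w
  obtain ⟨c, hc₁, hc₂⟩ : ∃ c : Q ⟶ B, π ≫ c = ι ≫ v ∧ σ ≫ a⟦(1 : ℤ)⟧' = c ≫ δ :=
    complete_distinguished_triangle_morphism _ _ hTw hT₂ a ι hw₁.symm
  obtain ⟨d, hd⟩ := swap_exists_factor hT₁ hT₂ hT₃ hTw hw₁ hw₃ hc₁ hc₂
    (swap_hom_eq_zero hT₁ hT₂ hT₃ hTw hg hw₁ hw₃ hc₁ hc₂ hAB hAA) (𝟙 Q)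
  have : IsIso c :=
    isIso_of_comp_eq_id_of_cancel hd.symm (swap_cancel hT₁ hT₂ hT₃ hc₁ hAB hAB₁ hWB)
  exact ⟨W', w, _, _, ι, g', η, distTriang_of_iso₃ hTw (asIso c), hT₃⟩

section Merge

variable {W X' X A B V R : C}
  {a : W ⟶ X'} {g : X' ⟶ A} {h : A ⟶ W⟦(1 : ℤ)⟧}
  {u : X' ⟶ X} {v : X ⟶ B} {δ : B ⟶ X'⟦(1 : ℤ)⟧}
  {r : X ⟶ V} {s : V ⟶ W⟦(1 : ℤ)⟧} {γ : A ⟶ V} {ρ : V ⟶ R} {t : R ⟶ A⟦(1 : ℤ)⟧} {c : B ⟶ R}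
  (hT₁ : Triangle.mk a g h ∈ distTriang C) (hT₂ : Triangle.mk u v δ ∈ distTriang C)
  (hTW : Triangle.mk (a ≫ u) r s ∈ distTriang C) (hTR : Triangle.mk γ ρ t ∈ distTriang C)
  (hγ₁ : g ≫ γ = u ≫ r) (hγ₂ : γ ≫ s = h)
  (hc₁ : v ≫ c = r ≫ ρ) (hc₂ : δ ≫ g⟦(1 : ℤ)⟧' = c ≫ t)

include hT₁ hT₂ hTW hTR hγ₁ hγ₂ in
lemma merge_comp_eq_zero {U : C} (hUB : ∀ f : U ⟶ B, f = 0) (x : U ⟶ R) : x ≫ t = 0 := by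
  have htγ : (x ≫ t) ≫ γ⟦(1 : ℤ)⟧' = 0 := by
    have htγ' : t ≫ γ⟦(1 : ℤ)⟧' = 0 := comp_distTriang_mor_zero₃₁ _ hTR
    rw [Category.assoc, htγ', comp_zero]
  obtain ⟨χ, hχ⟩ : ∃ χ : U ⟶ X'⟦(1 : ℤ)⟧, x ≫ t = χ ≫ (-(g⟦(1 : ℤ)⟧')) :=
    Triangle.coyoneda_exact₃ _ (rot_of_distTriang _ (rot_of_distTriang _
      (rot_of_distTriang _ hT₁))) (x ≫ t) (by
        change (x ≫ t) ≫ (-(h⟦(1 : ℤ)⟧')) = 0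
        rw [comp_neg, neg_eq_zero, ← hγ₂, Functor.map_comp, ← Category.assoc, htγ, zero_comp])
  obtain ⟨ζ, hζ⟩ : ∃ ζ : U ⟶ W⟦(1 : ℤ)⟧, χ ≫ u⟦(1 : ℤ)⟧' = ζ ≫ (-((a ≫ u)⟦(1 : ℤ)⟧')) :=
    Triangle.coyoneda_exact₂ _ (rot_of_distTriang _ (rot_of_distTriang _
      (rot_of_distTriang _ hTW))) (χ ≫ u⟦(1 : ℤ)⟧') (by
        change (χ ≫ u⟦(1 : ℤ)⟧') ≫ (-(r⟦(1 : ℤ)⟧')) = 0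
        rw [comp_neg, neg_eq_zero, Category.assoc, ← Functor.map_comp, ← hγ₁, Functor.map_comp,
          ← Category.assoc]
        rwa [hχ, comp_neg, neg_comp, neg_eq_zero] at htγ)
  obtain ⟨ϑ, hϑ⟩ : ∃ ϑ : U ⟶ B, χ + ζ ≫ a⟦(1 : ℤ)⟧' = ϑ ≫ δ :=
    Triangle.coyoneda_exact₁ _ hT₂ _ (by
      change (χ + ζ ≫ a⟦(1 : ℤ)⟧') ≫ u⟦(1 : ℤ)⟧' = 0
      rw [add_comp, hζ, Category.assoc, ← Functor.map_comp, comp_neg, neg_add_cancel])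
  have hag : a ≫ g = 0 := comp_distTriang_mor_zero₁₂ _ hT₁
  rw [hUB ϑ, zero_comp, add_eq_zero_iff_eq_neg] at hϑ
  rw [hχ, hϑ, neg_comp, comp_neg, neg_neg, Category.assoc, ← Functor.map_comp, hag,
    Functor.map_zero, comp_zero]


include hT₁ hT₂ hTW hTR hγ₁ hγ₂ hc₁ in
lemma merge_hom_eq_zero {U : C} (hUB : ∀ f : U ⟶ B, f = 0) (hUA : ∀ f : U ⟶ A, f = 0)
    (x : U ⟶ R) : x = 0 := by
  obtain ⟨y, rfl⟩ : ∃ y : U ⟶ V, x = y ≫ ρ :=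
    Triangle.coyoneda_exact₂ _ (rot_of_distTriang _ hTR) x
      (merge_comp_eq_zero hT₁ hT₂ hTW hTR hγ₁ hγ₂ hUB x)
  have hys : y ≫ s = 0 := by
    obtain ⟨ϑ, hϑ⟩ : ∃ ϑ : U ⟶ B, (y ≫ s) ≫ a⟦(1 : ℤ)⟧' = ϑ ≫ δ :=
      Triangle.coyoneda_exact₁ _ hT₂ _ (by
        have hs : s ≫ (a ≫ u)⟦(1 : ℤ)⟧' = 0 := comp_distTriang_mor_zero₃₁ _ hTW
        change ((y ≫ s) ≫ a⟦(1 : ℤ)⟧') ≫ u⟦(1 : ℤ)⟧' = 0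
        rw [Category.assoc, Category.assoc, ← Functor.map_comp, hs, comp_zero])
    obtain ⟨ϑ', hϑ'⟩ : ∃ ϑ' : U ⟶ A, y ≫ s = ϑ' ≫ h :=
      Triangle.coyoneda_exact₂ _ (rot_of_distTriang _ (rot_of_distTriang _ hT₁)) (y ≫ s) (by
        change (y ≫ s) ≫ (-(a⟦(1 : ℤ)⟧')) = 0
        rw [comp_neg, hϑ, hUB ϑ, zero_comp, neg_zero])
    rw [hϑ', hUA ϑ', zero_comp]
  obtain ⟨χ, rfl⟩ : ∃ χ : U ⟶ X, y = χ ≫ r :=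
    Triangle.coyoneda_exact₂ _ (rot_of_distTriang _ hTW) y hys
  rw [Category.assoc, ← hc₁, ← Category.assoc, hUB (χ ≫ v), zero_comp]

include hT₁ hT₂ hTW hTR hc₁ in
lemma merge_exists_factor {Y : C} (hAY : ∀ f : A ⟶ Y, f = 0)
    (hAY₁ : ∀ f : A⟦(1 : ℤ)⟧ ⟶ Y, f = 0) (hWY : ∀ f : W⟦(1 : ℤ)⟧ ⟶ Y, f = 0) (φ : B ⟶ Y) :
    ∃ ψ : R ⟶ Y, φ = c ≫ ψ := by
  have huv : u ≫ v = 0 := comp_distTriang_mor_zero₁₂ _ hT₂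
  obtain ⟨ψ₀, hψ₀⟩ : ∃ ψ₀ : V ⟶ Y, v ≫ φ = r ≫ ψ₀ :=
    Triangle.yoneda_exact₂ _ hTW (v ≫ φ) (by
      change (a ≫ u) ≫ v ≫ φ = 0
      rw [Category.assoc, reassoc_of% huv, zero_comp, comp_zero])
  obtain ⟨ψ, rfl⟩ : ∃ ψ : R ⟶ Y, ψ₀ = ρ ≫ ψ := Triangle.yoneda_exact₂ _ hTR ψ₀ (hAY _)
  obtain ⟨e, he⟩ : ∃ e : X'⟦(1 : ℤ)⟧ ⟶ Y, φ - c ≫ ψ = δ ≫ e :=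
    Triangle.yoneda_exact₃ _ hT₂ (φ - c ≫ ψ) (by
      change v ≫ (φ - c ≫ ψ) = 0
      rw [comp_sub, hψ₀, reassoc_of% hc₁, sub_self])
  obtain ⟨e', rfl⟩ : ∃ e' : A⟦(1 : ℤ)⟧ ⟶ Y, e = (-(g⟦(1 : ℤ)⟧')) ≫ e' :=
    Triangle.yoneda_exact₂ _ (rot_of_distTriang _ (rot_of_distTriang _
      (rot_of_distTriang _ hT₁))) e (by
        change (-(a⟦(1 : ℤ)⟧')) ≫ e = 0
        rw [neg_comp, hWY (a⟦(1 : ℤ)⟧' ≫ e), neg_zero])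
  rw [hAY₁ e', comp_zero, comp_zero, sub_eq_zero] at he
  exact ⟨ψ, he⟩

include hT₁ hT₂ hTW hTR hγ₁ hγ₂ hc₁ in
lemma merge_cancel (hAB₁ : ∀ f : A⟦(1 : ℤ)⟧ ⟶ B, f = 0) (hAA₁ : ∀ f : A⟦(1 : ℤ)⟧ ⟶ A, f = 0)
    (hWB : ∀ f : W⟦(1 : ℤ)⟧ ⟶ B, f = 0) (hWA : ∀ f : W⟦(1 : ℤ)⟧ ⟶ A, f = 0)
    (ψ : R ⟶ R) (hψ : c ≫ ψ = 0) : ψ = 0 := by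
  obtain ⟨e, he⟩ : ∃ e : W⟦(1 : ℤ)⟧ ⟶ R, ρ ≫ ψ = s ≫ e :=
    Triangle.yoneda_exact₃ _ hTW (ρ ≫ ψ) (by
      change r ≫ ρ ≫ ψ = 0
      rw [← Category.assoc, ← hc₁, Category.assoc, hψ, comp_zero])
  obtain ⟨e', rfl⟩ : ∃ e' : A⟦(1 : ℤ)⟧ ⟶ R, ψ = t ≫ e' :=
    Triangle.yoneda_exact₃ _ hTR ψ (by
      change ρ ≫ ψ = 0
      rw [he, merge_hom_eq_zero hT₁ hT₂ hTW hTR hγ₁ hγ₂ hc₁ hWB hWA e, comp_zero])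
  rw [merge_hom_eq_zero hT₁ hT₂ hTW hTR hγ₁ hγ₂ hc₁ hAB₁ hAA₁ e', comp_zero]

end Merge

lemma exists_distTriang_of_merge {W X' X A B : C}
    {a : W ⟶ X'} {g : X' ⟶ A} {h : A ⟶ W⟦(1 : ℤ)⟧}
    {u : X' ⟶ X} {v : X ⟶ B} {δ : B ⟶ X'⟦(1 : ℤ)⟧}
    (hT₁ : Triangle.mk a g h ∈ distTriang C) (hT₂ : Triangle.mk u v δ ∈ distTriang C)
    (hAB : ∀ f : A ⟶ B, f = 0) (hAB₁ : ∀ f : A⟦(1 : ℤ)⟧ ⟶ B, f = 0)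
    (hAA₁ : ∀ f : A⟦(1 : ℤ)⟧ ⟶ A, f = 0) (hWB : ∀ f : W⟦(1 : ℤ)⟧ ⟶ B, f = 0)
    (hWA : ∀ f : W⟦(1 : ℤ)⟧ ⟶ A, f = 0) :
    ∃ (V : C) (f₁ : W ⟶ X) (g₁ : X ⟶ V) (h₁ : V ⟶ W⟦(1 : ℤ)⟧)
      (f₂ : A ⟶ V) (g₂ : V ⟶ B) (h₂ : B ⟶ A⟦(1 : ℤ)⟧),
      Triangle.mk f₁ g₁ h₁ ∈ distTriang C ∧ Triangle.mk f₂ g₂ h₂ ∈ distTriang C := by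
  obtain ⟨V, r, s, hTW⟩ := distinguished_cocone_triangle (a ≫ u)
  obtain ⟨γ, hγ₁, hγ₂⟩ : ∃ γ : A ⟶ V, g ≫ γ = u ≫ r ∧ h ≫ (𝟙 W)⟦(1 : ℤ)⟧' = γ ≫ s :=
    complete_distinguished_triangle_morphism _ _ hT₁ hTW (𝟙 W) u (Category.id_comp _).symm
  rw [CategoryTheory.Functor.map_id, Category.comp_id] at hγ₂
  obtain ⟨R, ρ, t, hTR⟩ := distinguished_cocone_triangle γ
  obtain ⟨c, hc₁, hc₂⟩ : ∃ c : B ⟶ R, v ≫ c = r ≫ ρ ∧ δ ≫ g⟦(1 : ℤ)⟧' = c ≫ t :=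
    complete_distinguished_triangle_morphism _ _ hT₂ hTR g r hγ₁.symm
  obtain ⟨d, hd⟩ := merge_exists_factor hT₁ hT₂ hTW hTR hc₁ hAB hAB₁ hWB (𝟙 B)
  have : IsIso c := isIso_of_comp_eq_id_of_cancel hd.symm
    (merge_cancel hT₁ hT₂ hTW hTR hγ₁ hγ₂.symm hc₁ hAB₁ hAA₁ hWB hWA)
  exact ⟨V, _, _, _, γ, _, _, hTW, distTriang_of_iso₃ hTR (asIso c).symm⟩

lemma Tower.hom_shift_one_eq_zero {Q : ℤ → C → Prop} {b : ℤ} {Y : C} (hY : Tower Q b Y)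
    {A : C} {m : ℤ} (h : ∀ m' A', Q m' A' → b ≤ m' → ∀ f : A' ⟶ A⟦m - (m' + 1)⟧, f = 0)
    (f : Y⟦(1 : ℤ)⟧ ⟶ A⟦m⟧) : f = 0 :=
  hY.hom_shift_eq_zero (fun m' A' hA' hm' => shiftShift_hom_shift_eq_zero (h m' A' hA' hm')) f

/-- The new top piece `B⟦n⟧` is moved down past the pieces of lower degree, where `hBQ` makes
the extensions split, and merged with the piece of degree `n`. -/
lemma Tower.insert {Q Q' : ℤ → C → Prop} {G : C → Prop} {n : ℤ} {B : C}
    (hG : ∀ (A A' : C) (k : ℤ), G A → G A' → k < 0 → ∀ f : A ⟶ A'⟦k⟧, f = 0)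
    (hQG : ∀ m A, Q m A → G A) (hBG : G B)
    (hQB : ∀ m A, Q m A → m ≤ n → ∀ (k : ℤ) (f : A ⟶ B⟦k⟧), f = 0)
    (hBQ : ∀ m A, Q m A → m < n → ∀ k : ℤ, k ≤ 0 → ∀ f : B ⟶ A⟦k⟧, f = 0)
    (hQQ' : ∀ m A, Q m A → Q' m A) (hB : Q' n B)
    (hmerge : ∀ A V : C, Q n A → ∀ (f : A⟦n⟧ ⟶ V) (g : V ⟶ B⟦n⟧)
      (h : B⟦n⟧ ⟶ (A⟦n⟧)⟦(1 : ℤ)⟧), Triangle.mk f g h ∈ distTriang C → Q' n (V⟦-n⟧))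
    {b : ℤ} {X' : C} (hX' : Tower Q b X') (hb : b ≤ n) {X : C} (u : X' ⟶ X)
    (v : X ⟶ B⟦n⟧) (δ : B⟦n⟧ ⟶ X'⟦(1 : ℤ)⟧) (hT : Triangle.mk u v δ ∈ distTriang C) :
    Tower Q' b X := by
  induction hX' generalizing X with
  | zero b hX' => exact .step hb (.zero _ hX') u v δ hT hB
  | @step X'' X' A m b hm hX'' u₀ v₀ δ₀ hT₀ hA ih =>
    have hAG := hQG m A hA
    have hWB : ∀ f : X''⟦(1 : ℤ)⟧ ⟶ B⟦n⟧, f = 0 := hX''.hom_shift_one_eq_zero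
      fun m' A' hA' _ => if hm' : m' ≤ n then hQB m' A' hA' hm' _
        else hG A' B _ (hQG m' A' hA') hBG (by omega)
    rcases lt_trichotomy m n with hmn | rfl | hmn
    · obtain ⟨W', f₁, g₁, h₁, f₂, g₂, h₂, hT₁, hT₂⟩ := exists_distTriang_of_swap hT₀ hT
        (shift_hom_shift_eq_zero (hQB m A hA hmn.le _))
        (shiftShift_hom_shift_eq_zero (hQB m A hA hmn.le _))
        (shiftShift_hom_shift_eq_zero (hBQ m A hA hmn _ (by omega)))
        (shift_hom_shiftShift_eq_zero (hG A A _ hAG hAG (by omega))) hWB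
      exact .step hm (ih (by omega) f₁ g₁ h₁ hT₁) f₂ g₂ h₂ hT₂ (hQQ' m A hA)
    · obtain ⟨V, f₁, g₁, h₁, f₂, g₂, h₂, hT₁, hT₂⟩ := exists_distTriang_of_merge hT₀ hT
        (shift_hom_shift_eq_zero (hQB m A hA le_rfl _))
        (shiftShift_hom_shift_eq_zero (hQB m A hA le_rfl _))
        (shiftShift_hom_shift_eq_zero (hG A A _ hAG hAG (by omega))) hWB
        (hX''.hom_shift_one_eq_zero fun m' A' hA' hm' => hG A' A _ (hQG m' A' hA') hAG (by omega))
      exact .step hm (hX''.mono hQQ') f₁ _ _ (distTriang_of_iso₃ hT₁ (shiftNegShift V m).symm)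
        (hmerge A V hA f₂ g₂ h₂ hT₂)
    · exact .step hb (.mono hQQ' (.step (by omega) hX'' u₀ v₀ δ₀ hT₀ hA)) u v δ hT hB

def extClosureBelow {N : ℕ} (P : Fin N → C → Prop) (c : ℕ) : C → Prop :=
  ExtClosure fun X => ∃ j : Fin N, (j : ℕ) < c ∧ P j X

lemma extClosureBelow_mono {N : ℕ} {P : Fin N → C → Prop} {c c' : ℕ} (h : c ≤ c') {X : C}
    (hX : extClosureBelow P c X) : extClosureBelow P c' X :=
  hX.mono fun _ ⟨j, hj, hP⟩ => ⟨j, by omega, hP⟩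

lemma extClosure_of_extClosureBelow {N : ℕ} {P : Fin N → C → Prop} {c : ℕ} {X : C}
    (hX : extClosureBelow P c X) : ExtClosure (fun X => ∃ i, P i X) X :=
  hX.mono fun _ ⟨j, _, hP⟩ => ⟨j, hP⟩

/-- The pieces of a tower of `C_j`, `j < i`, into which the part in degrees `≥ c` of a tower of
`C_i` has been merged. -/
def GluedPiece {N : ℕ} (P : Fin N → C → Prop) (i : ℕ) (c m : ℤ) (A : C) : Prop :=
  extClosureBelow P i A ∨ (c ≤ m ∧ extClosureBelow P (i + 1) A)

lemma GluedPiece.extClosureBelow {N : ℕ} {P : Fin N → C → Prop} {i : ℕ} {c m : ℤ} {A : C}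
    (hA : GluedPiece P i c m A) (hm : m < c) : extClosureBelow P i A :=
  hA.resolve_right fun h => by omega

lemma GluedPiece.extClosure {N : ℕ} {P : Fin N → C → Prop} {i : ℕ} {c m : ℤ} {A : C}
    (hA : GluedPiece P i c m A) : ExtClosure (fun X => ∃ i, P i X) A :=
  hA.elim extClosure_of_extClosureBelow fun h => extClosure_of_extClosureBelow h.2

section Semiorthogonal

variable {N : ℕ} {D : Fin N → C → Prop} {P : Fin N → C → Prop}
  (hD : ∀ i, IsTriangulatedSub (D i))
  (hsemi : ∀ i j : Fin N, i < j → ∀ (X Y : C), D i X → D j Y → ∀ f : X ⟶ Y, f = 0)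
  (hP : ∀ i, IsHeartOn (D i) (P i))
  (hcross : ∀ i j : Fin N, i < j → ∀ (A B : C) (k : ℤ), P j A → P i B → k ≤ 0 →
    ∀ f : A ⟶ B⟦k⟧, f = 0)

include hD hsemi hP hcross in
lemma extClosure_hom_shift_eq_zero {k : ℤ} (hk : k < 0) {A B : C}
    (hA : ExtClosure (fun X => ∃ i, P i X) A) (hB : ExtClosure (fun X => ∃ i, P i X) B)
    (f : A ⟶ B⟦k⟧) : f = 0 := by
  refine ExtClosure.hom_shift_eq_zero (fun A B ⟨i, hA⟩ ⟨j, hB⟩ f => ?_) hA hB f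
  rcases lt_trichotomy i j with hij | rfl | hij
  · exact hsemi i j hij _ _ ((hP i).subset A hA) ((hD j).shift _ k ((hP j).subset B hB)) f
  · exact (hP i).hom_neg A B k hA hB hk f
  · exact hcross j i hij A B k hA hB hk.le f

include hsemi hP in
lemma extClosureBelow_hom_eq_zero {c : ℕ} {i : Fin N} (hc : c ≤ i) {V : C} (hV : D i V)
    {A : C} (hA : extClosureBelow P c A) (f : A ⟶ V) : f = 0 :=
  ExtClosure.hom_eq_zero_left (fun A ⟨j, hj, hA⟩ f =>
    hsemi j i (by rw [Fin.lt_def]; omega) A V ((hP j).subset A hA) hV f) hA f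

include hcross in
lemma hom_extClosureBelow_eq_zero {i : Fin N} {B : C} (hB : P i B) {c : ℕ} (hc : c ≤ i)
    {k : ℤ} (hk : k ≤ 0) {A : C} (hA : extClosureBelow P c A) (f : B ⟶ A⟦k⟧) : f = 0 :=
  ExtClosure.hom_shift_eq_zero_right (fun A ⟨j, hj, hA⟩ f =>
    hcross j i (by rw [Fin.lt_def]; omega) B A k hB hA hk f) hA f

include hD hsemi hP in
lemma Tower.hom_shift_eq_zero_of_le {c : ℕ} {b : ℤ} {Y : C}
    (hY : Tower (fun _ A => extClosureBelow P c A) b Y) {i : Fin N} (hc : c ≤ i) {V : C}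
    (hV : D i V) (s : ℤ) (f : Y⟦s⟧ ⟶ V) : f = 0 :=
  hY.hom_shift_eq_zero (fun _ _ hA _ => shiftShift_hom_eq_zero
    (extClosureBelow_hom_eq_zero hsemi hP hc ((hD i).shift V _ hV) hA)) f

include hD hsemi hP hcross in
lemma Tower.insert_piece (i : Fin N) {m b : ℤ} (hb : b ≤ m) {B : C} (hB : P i B) {Y X : C}
    (hY : Tower (GluedPiece P i (m + 1)) b Y) (f : Y ⟶ X) (g : X ⟶ B⟦m⟧)
    (h : B⟦m⟧ ⟶ Y⟦(1 : ℤ)⟧) (hT : Triangle.mk f g h ∈ distTriang C) :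
    Tower (GluedPiece P i m) b X :=
  hY.insert (G := ExtClosure fun X => ∃ i, P i X)
    (fun _ _ _ hA hA' hk f => extClosure_hom_shift_eq_zero hD hsemi hP hcross hk hA hA' f)
    (fun _ _ hA => hA.extClosure) (.of ⟨i, hB⟩)
    (fun _ _ hA hm k f => extClosureBelow_hom_eq_zero hsemi hP le_rfl
      ((hD i).shift _ k ((hP i).subset _ hB)) (hA.extClosureBelow (by omega)) f)
    (fun _ _ hA hm _ hk f => hom_extClosureBelow_eq_zero hcross hB le_rfl hk
      (hA.extClosureBelow (by omega)) f)
    (fun _ _ hA => hA.imp_right fun h => ⟨by omega, h.2⟩)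
    (Or.inr ⟨le_rfl, .of ⟨i, by omega, hB⟩⟩)
    (fun _ _ hA _ _ _ hT => Or.inr ⟨le_rfl, ExtClosure.shift_neg_of_distTriang hT
      (extClosureBelow_mono (by omega) (hA.extClosureBelow (by omega))) (.of ⟨i, by omega, hB⟩)⟩)
    hb f g h hT

include hD hsemi hP hcross in
lemma Tower.glue (i : Fin N) {c : ℤ} {Z : C} (hZ : Tower (fun _ A => P i A) c Z) {Y : C}
    {b : ℤ} (hY : Tower (fun _ A => extClosureBelow P i A) b Y) {X : C} (f : Y ⟶ X)
    (g : X ⟶ Z) (δ : Z ⟶ Y⟦(1 : ℤ)⟧) (hT : Triangle.mk f g δ ∈ distTriang C) :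
    Tower (GluedPiece P i c) (min b c) X := by
  induction hZ generalizing X with
  | zero _ hZ =>
    have : IsIso f := (Triangle.isZero₃_iff_isIso₁ _ hT).mp hZ
    exact ((hY.of_le (min_le_left _ _)).mono fun _ _ => Or.inl).of_iso (asIso f)
  | @step Z' Z B m c hm hZ' j q κ hTz hB ih =>
    -- `Y'` glues `Y` with `Z'` by induction, and `X` is `Y'` with the piece `B⟦m⟧` on top.
    obtain ⟨Y', p, r, hTa⟩ := distinguished_cocone_triangle₂ (j ≫ δ)
    obtain ⟨y, sq₁, sq₂⟩ : ∃ y : Y' ⟶ X, p ≫ y = 𝟙 Y ≫ f ∧ r ≫ j = y ≫ g :=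
      complete_distinguished_triangle_morphism₂ _ _ hTa hT (𝟙 Y) j (by simp [Triangle.mk])
    have hZD : D i Z := (Tower.step hm hZ' j q κ hTz hB).prop_of_isTriangulatedSub (hD i)
      fun _ A hA => (hP i).subset A hA
    obtain ⟨g', h', hTy⟩ := exists_distTriang_of_splice hTa hT hTz
      (sq₁.trans (Category.id_comp f)) sq₂.symm
      (hY.hom_shift_eq_zero_of_le hD hsemi hP le_rfl ((hD i).shift _ _ ((hP i).subset _ hB)) 1)
      (hY.hom_shift_eq_zero_of_le hD hsemi hP le_rfl hZD 1)
      (hZ'.hom_shift_one_eq_zero fun _ A hA _ => (hP i).hom_neg A B _ hA hB (by omega))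
    refine (((ih p r (j ≫ δ) hTa).of_le (min_le_min le_rfl (by omega))).insert_piece
      hD hsemi hP hcross i ((min_le_right _ _).trans hm) hB y g' h' hTy).mono ?_
    exact fun _ _ hA => hA.imp_right fun h => ⟨hm.trans h.1, h.2⟩

include hD hsemi hP hcross in
lemma exists_tower_of_semiorthogonal {obj : Fin (N + 1) → C} (hzero : IsZero (obj 0))
    (hsteps : ∀ i : Fin N, ∃ (f : obj i.castSucc ⟶ obj i.succ) (Z : C)
      (g : obj i.succ ⟶ Z) (h : Z ⟶ (obj i.castSucc)⟦(1 : ℤ)⟧),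
      (Triangle.mk f g h ∈ distTriang C) ∧ D i Z) (k : Fin (N + 1)) :
    ∃ b, Tower (fun _ A => extClosureBelow P k A) b (obj k) := by
  induction k using Fin.induction with
  | zero => exact ⟨0, .zero 0 hzero⟩
  | succ i ih =>
    obtain ⟨b, hY⟩ := ih
    obtain ⟨f, Z, g, h, hT, hZ⟩ := hsteps i
    obtain ⟨n, obj', deg, hfilt⟩ : ∃ (n : ℕ) (obj' : Fin (n + 1) → C) (deg : Fin n → ℤ),
        IsShiftedFiltration (P i) Z obj' deg := (hP i).filt Z hZ
    obtain ⟨c, hc⟩ := (Set.finite_range deg).bddBelow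
    have hZt := Tower.of_isShiftedFiltration hfilt fun j => hc (Set.mem_range_self j)
    refine ⟨min b c, (hZt.glue hD hsemi hP hcross i hY f g h hT).mono ?_⟩
    exact fun _ _ hA => hA.elim (extClosureBelow_mono (by simp)) fun h => h.2

end Semiorthogonal

/-- Given a semiorthogonal decomposition `D = ⟨D_N, …, D₂, D₁⟩` and hearts `C_i ⊆ D_i`
of bounded t-structures with `Hom^{≤0}(C_j, C_i) = 0` for `j > i`, the extension
closure `⟨C_1, …, C_N⟩_ex` is the heart of a bounded t-structure on `D`. -/
theorem stmt_9 {N : ℕ} (D : Fin N → C → Prop)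
    (hD : ∀ i, IsTriangulatedSub (D i))
    (hsemi : ∀ i j : Fin N, i < j → ∀ (X Y : C), D i X → D j Y → ∀ f : X ⟶ Y, f = 0)
    (hSOD : ∀ X : C, ∃ obj : Fin (N + 1) → C,
      IsZero (obj 0) ∧ Nonempty (obj (Fin.last N) ≅ X) ∧
      ∀ i : Fin N, ∃ (f : obj i.castSucc ⟶ obj i.succ) (Z : C)
        (g : obj i.succ ⟶ Z) (h : Z ⟶ (obj i.castSucc)⟦(1 : ℤ)⟧),
        (Triangle.mk f g h ∈ distTriang C) ∧ D i Z)
    (P : Fin N → C → Prop)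
    (hP : ∀ i, IsHeartOn (D i) (P i))
    (hcross : ∀ i j : Fin N, i < j → ∀ (A B : C) (k : ℤ), P j A → P i B → k ≤ 0 →
      ∀ f : A ⟶ B⟦k⟧, f = 0) :
    IsHeartOn (fun _ : C => True) (ExtClosure fun X : C => ∃ i, P i X) := by
  refine ⟨fun _ _ => trivial, fun A B k hA hB hk f =>
    extClosure_hom_shift_eq_zero hD hsemi hP hcross hk hA hB f, fun X _ => ?_⟩
  obtain ⟨obj, hzero, ⟨e⟩, hsteps⟩ := hSOD X
  obtain ⟨b, hX⟩ := exists_tower_of_semiorthogonal hD hsemi hP hcross hzero hsteps (Fin.last N)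
  obtain ⟨n, obj', deg, hfilt, -⟩ :=
    ((hX.mono fun _ _ => extClosure_of_extClosureBelow).of_iso e).exists_isShiftedFiltration
  exact ⟨n, obj', deg, hfilt⟩
end

section
/- Let A be an abelian category and let Z assign to each object E of A a complex number Z(E), depending only on the isomorphism class of E and additive on short exact sequences, i.e. Z(E) = Z(E') + Z(E'') whenever 0 → E' → E → E'' → 0 is exact. Suppose (T₁, F₁) and (T₂, F₂) are torsion pairs on A such that, for k = 1, 2: every nonzero object T of T_k satisfies Im Z(T) < 0, or Im Z(T) = 0 and Re Z(T) > 0; and every nonzero object F of F_k satisfies Im Z(F) > 0, or Im Z(F) = 0 and Re Z(F) < 0. Then T₁ = T₂ and F₁ = F₂. -/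
open CategoryTheory Limits

/-- A torsion pair `(T, F)` on an abelian category: full subcategories closed under
isomorphisms, with `Hom(T, F) = 0`, such that every object fits in a short exact
sequence `0 → t → X → f → 0` with `t ∈ T`, `f ∈ F`. -/
structure TorsionPairOn {A : Type*} [Category A] [Abelian A] (T F : A → Prop) : Prop where
  iso_t : ∀ {X Y : A}, (X ≅ Y) → T X → T Y
  iso_f : ∀ {X Y : A}, (X ≅ Y) → F X → F Y
  hom_zero : ∀ (X Y : A), T X → F Y → ∀ f : X ⟶ Y, f = 0
  decomp : ∀ X : A, ∃ (tX fX : A) (i : tX ⟶ X) (p : X ⟶ fX) (w : i ≫ p = 0),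
    T tX ∧ F fX ∧ (ShortComplex.mk i p w).ShortExact

/-- Key step: if `(T, F)` and `(T', F')` are torsion pairs with the sign conditions on
`T` and `F'`, then `T ⊆ T'`. -/
lemma t_subset {A : Type*} [Category A] [Abelian A]
    (Z : A → ℂ)
    (T F T' F' : A → Prop)
    (h : TorsionPairOn T F) (h' : TorsionPairOn T' F')
    (hT : ∀ X : A, T X → ¬ IsZero X →
      (Z X).im < 0 ∨ ((Z X).im = 0 ∧ 0 < (Z X).re))
    (hF' : ∀ X : A, F' X → ¬ IsZero X →
      0 < (Z X).im ∨ ((Z X).im = 0 ∧ (Z X).re < 0))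
    (X : A) (hX : T X) : T' X := by
  obtain ⟨t, f, i, p, w, ht, hf, hse⟩ := h'.decomp X
  -- show f ∈ T as well
  obtain ⟨a, b, i2, p2, w2, ha, hb, hse2⟩ := h.decomp f
  have hp : Epi p := hse.epi_g
  have hp2 : Epi p2 := hse2.epi_g
  have hcomp : p ≫ p2 = 0 := h.hom_zero X b hX hb _
  have hp2z : p2 = 0 := by
    rw [← cancel_epi p, hcomp, comp_zero]
  have hbz : IsZero b := by
    rw [hp2z] at hp2
    exact IsZero.of_epi_zero f b
  haveI hi2 : IsIso i2 := by
    haveI := hse2.mono_f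
    haveI := hse2.exact.epi_f hp2z
    exact isIso_of_mono_of_epi i2
  have hfT : T f := h.iso_t (asIso i2) ha
  -- f is both in T and F', hence zero
  have hfz : IsZero f := by
    by_contra hfz
    rcases hT f hfT hfz with h1 | ⟨h1, h1'⟩ <;>
      rcases hF' f hf hfz with h2 | ⟨h2, h2'⟩ <;> linarith
  have hpz : p = 0 := hfz.eq_of_tgt p 0
  haveI hi : IsIso i := by
    haveI := hse.mono_f
    haveI := hse.exact.epi_f hpz
    exact isIso_of_mono_of_epi i
  exact h'.iso_t (asIso i) ht

/-- Two torsion pairs whose tilts both support a stability condition with the same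
central charge `Z` and phase cut coincide. -/
theorem stmt_10 {A : Type*} [Category A] [Abelian A]
    (Z : A → ℂ)
    (hiso : ∀ {X Y : A}, (X ≅ Y) → Z X = Z Y)
    (hadd : ∀ S : ShortComplex A, S.ShortExact → Z S.X₂ = Z S.X₁ + Z S.X₃)
    (T₁ F₁ T₂ F₂ : A → Prop)
    (h₁ : TorsionPairOn T₁ F₁) (h₂ : TorsionPairOn T₂ F₂)
    (hT₁ : ∀ X : A, T₁ X → ¬ IsZero X →
      (Z X).im < 0 ∨ ((Z X).im = 0 ∧ 0 < (Z X).re))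
    (hT₂ : ∀ X : A, T₂ X → ¬ IsZero X →
      (Z X).im < 0 ∨ ((Z X).im = 0 ∧ 0 < (Z X).re))
    (hF₁ : ∀ X : A, F₁ X → ¬ IsZero X →
      0 < (Z X).im ∨ ((Z X).im = 0 ∧ (Z X).re < 0))
    (hF₂ : ∀ X : A, F₂ X → ¬ IsZero X →
      0 < (Z X).im ∨ ((Z X).im = 0 ∧ (Z X).re < 0)) :
    (∀ X : A, T₁ X ↔ T₂ X) ∧ (∀ X : A, F₁ X ↔ F₂ X) := by
  have hT : ∀ X : A, T₁ X ↔ T₂ X := fun X =>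
    ⟨t_subset Z T₁ F₁ T₂ F₂ h₁ h₂ hT₁ hF₂ X,
     t_subset Z T₂ F₂ T₁ F₁ h₂ h₁ hT₂ hF₁ X⟩
  refine ⟨hT, fun X => ?_⟩
  constructor
  · intro hX
    obtain ⟨t, f, i, p, w, ht, hf, hse⟩ := h₂.decomp X
    have hi : Mono i := hse.mono_f
    have hiz : i = 0 := h₁.hom_zero t X ((hT t).mpr ht) hX i
    have htz : IsZero t := by
      rw [hiz] at hi
      exact IsZero.of_mono_zero t X
    haveI hpiso : IsIso p := by
      haveI := hse.epi_g
      haveI := hse.exact.mono_g hiz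
      exact isIso_of_mono_of_epi p
    exact h₂.iso_f (asIso p).symm hf
  · intro hX
    obtain ⟨t, f, i, p, w, ht, hf, hse⟩ := h₁.decomp X
    have hi : Mono i := hse.mono_f
    have hiz : i = 0 := h₂.hom_zero t X ((hT t).mp ht) hX i
    have htz : IsZero t := by
      rw [hiz] at hi
      exact IsZero.of_mono_zero t X
    haveI hpiso : IsIso p := by
      haveI := hse.epi_g
      haveI := hse.exact.mono_g hiz
      exact isIso_of_mono_of_epi p
    exact h₁.iso_f (asIso p).symm hf
end

section
/- Let p⁽¹⁾, p⁽²⁾, p⁽³⁾, p⁽⁴⁾ ∈ ℂ² ∖ {0} be pairwise linearly independent vectors, with coordinates p⁽ⁱ⁾ = (p₁⁽ⁱ⁾, p₂⁽ⁱ⁾). Let V₁, V₀, W₁, …, W₄ be finite-dimensional complex vector spaces together with linear maps X₁, X₂ : V₁ → V₀ and πᵢ : V₀ → Wᵢ (i = 1, …, 4) satisfying the relations p₂⁽ⁱ⁾·(πᵢ ∘ X₁) = p₁⁽ⁱ⁾·(πᵢ ∘ X₂) for every i. A subrepresentation consists of subspaces U₁ ⊆ V₁, U₀ ⊆ V₀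 and Sᵢ ⊆ Wᵢ with X₁(U₁) ⊆ U₀, X₂(U₁) ⊆ U₀ and πᵢ(U₀) ⊆ Sᵢ for all i. Suppose that dim V₀ + dim V₁ = ∑ᵢ dim Wᵢ > 0 and that for every subrepresentation other than the zero one and the whole representation one has dim U₁ + dim U₀ < ∑ᵢ dim Sᵢ. Then dim V₁ < dim V₀. -/
set_option linter.unusedVariables false
set_option linter.constructorNameAsVariable false

open Module Submodule LinearMap

private lemma helper_rank {A B : Type*} [AddCommGroup A] [Module ℂ A]
    [FiniteDimensional ℂ A] [AddCommGroup B] [Module ℂ B]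
    (f : A →ₗ[ℂ] B) (R : Submodule ℂ A) :
    Module.finrank ℂ (R.map f) + Module.finrank ℂ ↥(R ⊓ LinearMap.ker f) =
      Module.finrank ℂ R := by
  have h := LinearMap.finrank_range_add_finrank_ker (f.comp R.subtype)
  rw [LinearMap.range_comp, Submodule.range_subtype, LinearMap.ker_comp] at h
  rw [← h]
  congr 1
  rw [← Submodule.map_comap_subtype, Submodule.finrank_map_subtype_eq]


private lemma arith_neg (v1 v0 rr d0 d1 d2 d3 c0 c1 c2 c3 y0 y1 y2 y3 k0 k1 k2 k3 : ℕ)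
    (hs : v1 + rr < d0 + d1 + d2 + d3)
    (hc0 : d0 + c0 = rr) (hc1 : d1 + c1 = rr) (hc2 : d2 + c2 = rr) (hc3 : d3 + c3 = rr)
    (hy0 : y0 ≤ c0) (hy1 : y1 ≤ c1) (hy2 : y2 ≤ c2) (hy3 : y3 ≤ c3)
    (hr0 : y0 + k0 = v1) (hr1 : y1 + k1 = v1) (hr2 : y2 + k2 = v1) (hr3 : y3 + k3 = v1)
    (hk01 : k0 + k1 ≤ v1) (hk23 : k2 + k3 ≤ v1) (hrle : rr ≤ v0) : v1 < v0 := by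
  omega

private lemma arith_pos (v1 v0 w0 w1 w2 w3 c0 c1 c2 c3 y0 y1 y2 y3 k0 k1 k2 k3 : ℕ)
    (hA0 : w0 + c0 = v0) (hA1 : w1 + c1 = v0) (hA2 : w2 + c2 = v0) (hA3 : w3 + c3 = v0)
    (hB0 : y0 ≤ c0) (hB1 : y1 ≤ c1) (hB2 : y2 ≤ c2) (hB3 : y3 ≤ c3)
    (hr0 : y0 + k0 = v1) (hr1 : y1 + k1 = v1) (hr2 : y2 + k2 = v1) (hr3 : y3 + k3 = v1)
    (hk01 : k0 + k1 ≤ v1) (hk02 : k0 + k2 ≤ v1) (hk03 : k0 + k3 ≤ v1)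
    (hk12 : k1 + k2 ≤ v1) (hk13 : k1 + k3 ≤ v1) (hk23 : k2 + k3 ≤ v1)
    (hdim : v0 + v1 = w0 + w1 + w2 + w3) (hcon : v0 ≤ v1) (hv1 : 0 < v1) :
    c1 = k0 ∧ c2 = k0 ∧ c3 = k0 ∧ c0 = k1 ∧ c2 = k1 ∧ 0 < c1 := by
  omega

set_option maxHeartbeats 1000000

/-- Lemma 5.19 of the paper (case `d = 4`): if a representation of the quiver with
vertices `V₁ ⇉ V₀ → W₁, …, W₄` satisfying the relations
`p₂⁽ⁱ⁾ πᵢ X₁ = p₁⁽ⁱ⁾ πᵢ X₂` is `μ`-stable of slope zero, i.e.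
`dim V₀ + dim V₁ = ∑ dim Wᵢ > 0` and every proper nonzero subrepresentation satisfies
`dim U₁ + dim U₀ < ∑ dim Sᵢ`, then `dim V₁ < dim V₀`. -/
theorem stmt_12 (p : Fin 4 → ℂ × ℂ)
    (hp : ∀ i j, i ≠ j → LinearIndependent ℂ ![p i, p j])
    (V₁ V₀ : Type*) [AddCommGroup V₁] [Module ℂ V₁] [FiniteDimensional ℂ V₁]
    [AddCommGroup V₀] [Module ℂ V₀] [FiniteDimensional ℂ V₀]
    (W : Fin 4 → Type*) [∀ i, AddCommGroup (W i)] [∀ i, Module ℂ (W i)]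
    [∀ i, FiniteDimensional ℂ (W i)]
    (X₁ X₂ : V₁ →ₗ[ℂ] V₀) (π : ∀ i, V₀ →ₗ[ℂ] W i)
    (hrel : ∀ i, (p i).2 • ((π i).comp X₁) = (p i).1 • ((π i).comp X₂))
    (hdim : Module.finrank ℂ V₀ + Module.finrank ℂ V₁ = ∑ i, Module.finrank ℂ (W i))
    (hpos : 0 < ∑ i, Module.finrank ℂ (W i))
    (hstab : ∀ (U₁ : Submodule ℂ V₁) (U₀ : Submodule ℂ V₀)
      (S : ∀ i, Submodule ℂ (W i)),
      U₁.map X₁ ≤ U₀ → U₁.map X₂ ≤ U₀ → (∀ i, U₀.map (π i) ≤ S i) →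
      ¬ (U₁ = ⊥ ∧ U₀ = ⊥ ∧ ∀ i, S i = ⊥) →
      ¬ (U₁ = ⊤ ∧ U₀ = ⊤ ∧ ∀ i, S i = ⊤) →
      Module.finrank ℂ U₁ + Module.finrank ℂ U₀ < ∑ i, Module.finrank ℂ (S i)) :
    Module.finrank ℂ V₁ < Module.finrank ℂ V₀ := by
  classical
  -- some W i is nonzero
  have hWex : ∃ i0 : Fin 4, Module.finrank ℂ (W i0) ≠ 0 := by
    by_contra h
    push_neg at h
    rw [Finset.sum_eq_zero (fun i _ => h i)] at hpos
    exact lt_irrefl 0 hpos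
  obtain ⟨i0, hi0⟩ := hWex
  have hWbotne : (⊥ : Submodule ℂ (W i0)) ≠ ⊤ := by
    intro h
    apply hi0
    rw [← finrank_top ℂ (W i0), ← h, finrank_bot]
  -- ker X₁ ⊓ ker X₂ = ⊥
  have hker12 : LinearMap.ker X₁ ⊓ LinearMap.ker X₂ = ⊥ := by
    by_contra hne
    have h := hstab (LinearMap.ker X₁ ⊓ LinearMap.ker X₂) ⊥ (fun _ => ⊥)
      (by rintro x ⟨y, hy, rfl⟩; exact (Submodule.mem_bot ℂ).mpr hy.1)
      (by rintro x ⟨y, hy, rfl⟩; exact (Submodule.mem_bot ℂ).mpr hy.2)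
      (by intro i; simp)
      (by rintro ⟨h, -, -⟩; exact hne h)
      (by rintro ⟨-, -, hS⟩; exact hWbotne (hS i0))
    simp [finrank_bot] at h
  -- the maps Y i
  set Y : Fin 4 → (V₁ →ₗ[ℂ] V₀) := fun i => (p i).2 • X₁ - (p i).1 • X₂ with hY
  have hYapp : ∀ i u, Y i u = (p i).2 • X₁ u - (p i).1 • X₂ u := by
    intro i u
    simp [hY]
  have hYrange : ∀ i, LinearMap.range (Y i) ≤ LinearMap.ker (π i) := by
    intro i
    rw [LinearMap.range_le_ker_iff]
    ext v
    have hv := LinearMap.congr_fun (hrel i) v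
    simp only [LinearMap.smul_apply, LinearMap.comp_apply] at hv
    simp only [LinearMap.comp_apply, LinearMap.zero_apply, hYapp, map_sub, map_smul]
    rw [hv, sub_self]
  -- determinants are nonzero
  have hdet : ∀ i j, i ≠ j → (p i).1 * (p j).2 - (p i).2 * (p j).1 ≠ 0 := by
    intro i j hij hd
    have H := LinearIndependent.pair_iff.mp (hp i j hij)
    have e1 : (p j).2 • p i + (-(p i).2) • p j = 0 := by
      rw [Prod.ext_iff]
      simp only [Prod.fst_add, Prod.snd_add, Prod.smul_fst, Prod.smul_snd, smul_eq_mul,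
        Prod.fst_zero, Prod.snd_zero]
      constructor
      · linear_combination hd
      · ring
    obtain ⟨hj2, hi2'⟩ := H _ _ e1
    have hi2 : (p i).2 = 0 := neg_eq_zero.mp hi2'
    have e2 : (p j).1 • p i + (-(p i).1) • p j = 0 := by
      rw [Prod.ext_iff]
      simp only [Prod.fst_add, Prod.snd_add, Prod.smul_fst, Prod.smul_snd, smul_eq_mul,
        Prod.fst_zero, Prod.snd_zero]
      constructor
      · ring
      · rw [hi2, hj2]; ring
    obtain ⟨hj1, hi1'⟩ := H _ _ e2
    have hi1 : (p i).1 = 0 := neg_eq_zero.mp hi1'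
    have hpi : p i = 0 := by
      rw [Prod.ext_iff]
      exact ⟨hi1, hi2⟩
    exact one_ne_zero (H 1 0 (by simp [hpi])).1
  -- pairwise disjoint kernels of the Y i
  have hYker : ∀ i j, i ≠ j → LinearMap.ker (Y i) ⊓ LinearMap.ker (Y j) = ⊥ := by
    intro i j hij
    rw [eq_bot_iff]
    rintro u ⟨hui, huj⟩
    have h1 : (p i).2 • X₁ u - (p i).1 • X₂ u = 0 := by
      rw [← hYapp]; exact hui
    have h2 : (p j).2 • X₁ u - (p j).1 • X₂ u = 0 := by
      rw [← hYapp]; exact huj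
    have d := hdet i j hij
    have ha : X₁ u = 0 := by
      have hc : ((p i).1 * (p j).2 - (p i).2 * (p j).1) • X₁ u = 0 := by
        calc ((p i).1 * (p j).2 - (p i).2 * (p j).1) • X₁ u
            = (p i).1 • ((p j).2 • X₁ u - (p j).1 • X₂ u)
              - (p j).1 • ((p i).2 • X₁ u - (p i).1 • X₂ u) := by module
          _ = 0 := by rw [h1, h2, smul_zero, smul_zero, sub_zero]
      exact ((smul_eq_zero.mp hc).resolve_left d)
    have hb : X₂ u = 0 := by
      have hc : ((p i).1 * (p j).2 - (p i).2 • (p j).1) • X₂ u = 0 := by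
        calc ((p i).1 * (p j).2 - (p i).2 * (p j).1) • X₂ u
            = (p i).2 • ((p j).2 • X₁ u - (p j).1 • X₂ u)
              - (p j).2 • ((p i).2 • X₁ u - (p i).1 • X₂ u) := by module
          _ = 0 := by rw [h1, h2, smul_zero, smul_zero, sub_zero]
      exact ((smul_eq_zero.mp hc).resolve_left d)
    have : u ∈ LinearMap.ker X₁ ⊓ LinearMap.ker X₂ := ⟨ha, hb⟩
    rw [hker12] at this
    exact this
  -- infimum of kernels of π is ⊥
  have hkerpi : (⨅ i, LinearMap.ker (π i)) = ⊥ := by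
    by_contra hne
    have h := hstab ⊥ (⨅ i, LinearMap.ker (π i)) (fun _ => ⊥)
      (by simp)
      (by simp)
      (by
        intro i
        rintro x ⟨y, hy, rfl⟩
        exact (Submodule.mem_bot ℂ).mpr ((Submodule.mem_iInf _).mp hy i))
      (by rintro ⟨-, h, -⟩; exact hne h)
      (by rintro ⟨-, -, hS⟩; exact hWbotne (hS i0))
    simp [finrank_bot] at h
  -- rank-nullity for the Y i
  have hrkY : ∀ i, Module.finrank ℂ (LinearMap.range (Y i)) +
      Module.finrank ℂ (LinearMap.ker (Y i)) = Module.finrank ℂ V₁ :=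
    fun i => LinearMap.finrank_range_add_finrank_ker (Y i)
  -- pairwise kernel dimension bound
  have hkk : ∀ i j, i ≠ j → Module.finrank ℂ (LinearMap.ker (Y i)) +
      Module.finrank ℂ (LinearMap.ker (Y j)) ≤ Module.finrank ℂ V₁ := by
    intro i j hij
    have h := Submodule.finrank_sup_add_finrank_inf_eq (LinearMap.ker (Y i)) (LinearMap.ker (Y j))
    rw [hYker i j hij, finrank_bot] at h
    have h2 := Submodule.finrank_le (LinearMap.ker (Y i) ⊔ LinearMap.ker (Y j))
    omega
  rcases Nat.eq_zero_or_pos (Module.finrank ℂ V₁) with hv1 | hv1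
  · rw [hv1] at hdim ⊢
    omega
  -- main subrepresentation
  set R := LinearMap.range X₁ ⊔ LinearMap.range X₂ with hR
  have hm1 : Submodule.map X₁ ⊤ ≤ R := by
    rw [Submodule.map_top]; exact le_sup_left
  have hm2 : Submodule.map X₂ ⊤ ≤ R := by
    rw [Submodule.map_top]; exact le_sup_right
  have hnz : ¬((⊤ : Submodule ℂ V₁) = ⊥ ∧ R = ⊥ ∧ ∀ i, Submodule.map (π i) R = ⊥) := by
    rintro ⟨h, -, -⟩
    have h0 : Module.finrank ℂ (⊤ : Submodule ℂ V₁) = 0 := by rw [h, finrank_bot]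
    rw [finrank_top] at h0
    omega
  have hYinR : ∀ i, LinearMap.range (Y i) ≤ R := by
    intro i
    rintro x ⟨u, rfl⟩
    rw [hYapp]
    exact Submodule.sub_mem _
      (Submodule.smul_mem _ _ (Submodule.mem_sup_left (LinearMap.mem_range_self X₁ u)))
      (Submodule.smul_mem _ _ (Submodule.mem_sup_right (LinearMap.mem_range_self X₂ u)))
  have hc : ∀ i, Module.finrank ℂ (Submodule.map (π i) R) +
      Module.finrank ℂ ↥(R ⊓ LinearMap.ker (π i)) = Module.finrank ℂ ↥R :=
    fun i => helper_rank (π i) R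
  have hcY : ∀ i, Module.finrank ℂ (LinearMap.range (Y i)) ≤
      Module.finrank ℂ ↥(R ⊓ LinearMap.ker (π i)) :=
    fun i => Submodule.finrank_mono (le_inf (hYinR i) (hYrange i))
  by_cases hwhole : R = ⊤ ∧ ∀ i, Submodule.map (π i) R = ⊤
  case neg =>
    have hs := hstab ⊤ R (fun i => Submodule.map (π i) R) hm1 hm2 (fun i => le_rfl) hnz
      (by rintro ⟨-, h1, h2⟩; exact hwhole ⟨h1, h2⟩)
    rw [finrank_top, Fin.sum_univ_four] at hs
    beta_reduce at hs
    exact arith_neg _ _ _ _ _ _ _ _ _ _ _ _ _ _ _ _ _ _ _ hs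
      (hc 0) (hc 1) (hc 2) (hc 3) (hcY 0) (hcY 1) (hcY 2) (hcY 3)
      (hrkY 0) (hrkY 1) (hrkY 2) (hrkY 3)
      (hkk 0 1 (by decide)) (hkk 2 3 (by decide)) (Submodule.finrank_le R)
  case pos =>
    obtain ⟨hRtop, hπtop⟩ := hwhole
    by_contra hcon
    push_neg at hcon
    -- dimension identities with R = ⊤
    have hceq : ∀ i, Module.finrank ℂ (W i) + Module.finrank ℂ (LinearMap.ker (π i)) =
        Module.finrank ℂ V₀ := by
      intro i
      have h := hc i
      have h2 := hπtop i
      rw [hRtop] at h h2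
      rw [h2, top_inf_eq] at h
      rw [finrank_top, finrank_top] at h
      exact h
    have hcge : ∀ i, Module.finrank ℂ (LinearMap.range (Y i)) ≤
        Module.finrank ℂ (LinearMap.ker (π i)) :=
      fun i => Submodule.finrank_mono (hYrange i)
    rw [Fin.sum_univ_four] at hdim
    -- the key construction
    have main : ∀ i j, i ≠ j →
        Module.finrank ℂ (LinearMap.ker (π j)) ≤ Module.finrank ℂ (LinearMap.ker (Y i)) →
        Module.finrank ℂ (LinearMap.ker (Y i)) ≤ Module.finrank ℂ (LinearMap.ker (π j)) →
        LinearMap.ker (π j) =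
          Submodule.map X₁ (LinearMap.ker (Y i)) ⊔ Submodule.map X₂ (LinearMap.ker (Y i)) := by
      intro i j hij hn1 hn2
      have hfmap : Module.finrank ℂ (Submodule.map (Y j) (LinearMap.ker (Y i))) =
          Module.finrank ℂ (LinearMap.ker (Y i)) := by
        have h := helper_rank (Y j) (LinearMap.ker (Y i))
        rw [hYker i j hij, finrank_bot] at h
        omega
      have hmle : Submodule.map (Y j) (LinearMap.ker (Y i)) ≤ LinearMap.ker (π j) := by
        refine le_trans ?_ (hYrange j)
        rintro x ⟨u, -, rfl⟩
        exact LinearMap.mem_range_self _ u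
      have hker_eq : LinearMap.ker (π j) = Submodule.map (Y j) (LinearMap.ker (Y i)) := by
        refine (Submodule.eq_of_le_of_finrank_le hmle ?_).symm
        rw [hfmap]
        exact hn1
      have hsub : LinearMap.ker (π j) ≤
          Submodule.map X₁ (LinearMap.ker (Y i)) ⊔ Submodule.map X₂ (LinearMap.ker (Y i)) := by
        rw [hker_eq]
        rintro x ⟨u, hu, rfl⟩
        rw [hYapp]
        exact Submodule.sub_mem _
          (Submodule.smul_mem _ _ (Submodule.mem_sup_left (Submodule.mem_map_of_mem hu)))
          (Submodule.smul_mem _ _ (Submodule.mem_sup_right (Submodule.mem_map_of_mem hu)))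
      have hUle : Module.finrank ℂ
          ↥(Submodule.map X₁ (LinearMap.ker (Y i)) ⊔ Submodule.map X₂ (LinearMap.ker (Y i))) ≤
          Module.finrank ℂ (LinearMap.ker (Y i)) := by
        by_cases h2 : (p i).2 = 0
        · have hp1 : (p i).1 ≠ 0 := by
            intro h1'
            have hne := (hp i j hij).ne_zero 0
            apply hne
            simp only [Matrix.cons_val_zero]
            rw [Prod.ext_iff]
            exact ⟨h1', h2⟩
          have hX2 : Submodule.map X₂ (LinearMap.ker (Y i)) ≤
              Submodule.map X₁ (LinearMap.ker (Y i)) := by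
            rintro x ⟨u, hu, rfl⟩
            have h1 : (p i).2 • X₁ u - (p i).1 • X₂ u = 0 := by rw [← hYapp]; exact hu
            rw [h2, zero_smul, zero_sub, neg_eq_zero] at h1
            have hz : X₂ u = 0 := (smul_eq_zero.mp h1).resolve_left hp1
            rw [hz]
            exact Submodule.zero_mem _
          refine le_trans (Submodule.finrank_mono (sup_le le_rfl hX2)) ?_
          exact Submodule.finrank_map_le X₁ (LinearMap.ker (Y i))
        · have hX1 : Submodule.map X₁ (LinearMap.ker (Y i)) ≤
              Submodule.map X₂ (LinearMap.ker (Y i)) := by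
            rintro x ⟨u, hu, rfl⟩
            have h1 : (p i).2 • X₁ u - (p i).1 • X₂ u = 0 := by rw [← hYapp]; exact hu
            have h1' : (p i).2 • X₁ u = (p i).1 • X₂ u := sub_eq_zero.mp h1
            refine ⟨((p i).1 / (p i).2) • u, Submodule.smul_mem _ _ hu, ?_⟩
            rw [map_smul, div_eq_mul_inv, mul_comm, mul_smul, ← h1']
            exact inv_smul_smul₀ h2 _
          refine le_trans (Submodule.finrank_mono (sup_le hX1 le_rfl)) ?_
          exact Submodule.finrank_map_le X₂ (LinearMap.ker (Y i))
      exact Submodule.eq_of_le_of_finrank_le hsub (le_trans hUle hn2)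
    obtain ⟨q1, q2, q3, q0, q2', qpos⟩ :=
      arith_pos _ _ _ _ _ _ _ _ _ _ _ _ _ _ _ _ _ _
        (hceq 0) (hceq 1) (hceq 2) (hceq 3) (hcge 0) (hcge 1) (hcge 2) (hcge 3)
        (hrkY 0) (hrkY 1) (hrkY 2) (hrkY 3)
        (hkk 0 1 (by decide)) (hkk 0 2 (by decide)) (hkk 0 3 (by decide))
        (hkk 1 2 (by decide)) (hkk 1 3 (by decide)) (hkk 2 3 (by decide))
        hdim hcon hv1
    have g1 := main 0 1 (by decide) (le_of_eq q1) (le_of_eq q1.symm)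
    have g2 := main 0 2 (by decide) (le_of_eq q2) (le_of_eq q2.symm)
    have g3 := main 0 3 (by decide) (le_of_eq q3) (le_of_eq q3.symm)
    have f0 := main 1 0 (by decide) (le_of_eq q0) (le_of_eq q0.symm)
    have f2 := main 1 2 (by decide) (le_of_eq q2') (le_of_eq q2'.symm)
    have g0 : LinearMap.ker (π 0) =
        Submodule.map X₁ (LinearMap.ker (Y 0)) ⊔ Submodule.map X₂ (LinearMap.ker (Y 0)) := by
      rw [f0, ← f2, g2]
    have hbot : LinearMap.ker (π 1) = ⊥ := by
      rw [← hkerpi]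
      refine le_antisymm (le_iInf fun i => ?_) (iInf_le _ 1)
      fin_cases i
      · exact le_of_eq (g1.trans g0.symm)
      · exact le_rfl
      · exact le_of_eq (g1.trans g2.symm)
      · exact le_of_eq (g1.trans g3.symm)

    rw [hbot, finrank_bot] at qpos
    exact lt_irrefl 0 qpos
end

section
/- Let p⁽¹⁾, p⁽²⁾, p⁽³⁾, p⁽⁴⁾ ∈ ℂ² ∖ {0} be pairwise linearly independent vectors. Let A₁ and A₂ denote the spaces of homogeneous polynomials in ℂ[x₁, x₂] of degrees 1 and 2 respectively (so dim A₁ = 2 and dim A₂ = 3), and let evᵢ : A₂ → ℂ denote evaluation at p⁽ⁱ⁾. Then for all subspaces U₁ ⊆ A₁, U₀ ⊆ A₂ and Sᵢ ⊆ ℂ (i = 1, …, 4) satisfying x₁·U₁ ⊆ U₀, x₂·U₁ ⊆ U₀, evᵢ(U₀) ⊆ Sᵢ for all i, and U₁ ≠ A₁, one has dim U₁ + dim U₀ ≤ ∑_{i=1}^{4} dim Sᵢ. -/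
/-!
A binary form of degree `n` vanishing at `n + 1` pairwise independent points is zero, because its
coefficient vector is killed by a projective Vandermonde matrix with nonzero determinant. So if
`Sᵢ = 0` for `k` of the four indices, `U₀` consists of quadrics vanishing at `k` of the points and
`dim U₀ ≤ 3 - k`, while `∑ dim Sᵢ ≥ 4 - k`. Finally `dim U₁ ≤ 1` as `U₁ ⊊ A₁`, and multiplication
by `x₁` embeds `U₁` into `U₀`, which settles the case `k = 4`.
-/

open MvPolynomial Finset

lemma LinearIndependent.fst_mul_snd_sub_ne_zero {K : Type*} [Field K] {u v : K × K}
    (h : LinearIndependent K ![u, v]) : v.1 * u.2 - u.1 * v.2 ≠ 0 := by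
  intro hdet
  rw [LinearIndependent.pair_iff] at h
  have h₂ := h v.2 (-u.2) (Prod.ext (by simp; linear_combination -hdet) (by simp; ring))
  have h₁ := h v.1 (-u.1) (Prod.ext (by simp; ring) (by simp; linear_combination hdet))
  have hu : u = 0 := Prod.ext (by simpa using h₁.2) (by simpa using h₂.2)
  simpa [hu] using h 1 0

namespace MvPolynomial

variable {R K : Type*} [CommSemiring R] [Field K] {n : ℕ}

instance {σ : Type*} [Finite σ] : Module.Finite R (homogeneousSubmodule σ R n) :=
  Module.Finite.iff_fg.2 (homogeneousSubmodule_fg σ R n)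

/-- The exponent of `X₀ ^ j * X₁ ^ (n - j)`, indexed as the columns of `Matrix.projVandermonde`. -/
noncomputable def binaryExponent (n : ℕ) (j : Fin (n + 1)) : Fin 2 →₀ ℕ :=
  Finsupp.single 0 (j : ℕ) + Finsupp.single 1 (j.rev : ℕ)

lemma binaryExponent_injective : Function.Injective (binaryExponent n) := by
  intro i j h
  ext
  simpa [binaryExponent] using DFunLike.congr_fun h 0

lemma exists_binaryExponent_eq {d : Fin 2 →₀ ℕ} (hd : d.degree = n) :
    ∃ j, binaryExponent n j = d := by
  rw [Finsupp.degree_eq_sum, Fin.sum_univ_two] at hd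
  refine ⟨⟨d 0, by omega⟩, ?_⟩
  ext i
  fin_cases i <;> simp [binaryExponent]
  omega

lemma IsHomogeneous.eval_eq_sum {f : MvPolynomial (Fin 2) R} (hf : f.IsHomogeneous n)
    (x : Fin 2 → R) :
    eval x f =
      ∑ j : Fin (n + 1), x 0 ^ (j : ℕ) * x 1 ^ (j.rev : ℕ) * coeff (binaryExponent n j) f := by
  have hsupp : f.support ⊆ univ.image (binaryExponent n) := fun d hd => by
    obtain ⟨j, rfl⟩ := exists_binaryExponent_eq (hf.degree_eq_sum_deg_support hd).symm
    exact mem_image_of_mem _ (mem_univ j)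
  rw [eval_eq', sum_subset hsupp fun d _ hd => by simp [notMem_support_iff.1 hd],
    sum_image fun i _ j _ h => binaryExponent_injective h]
  refine sum_congr rfl fun j _ => ?_
  simp [binaryExponent, Fin.prod_univ_two]
  ring

theorem IsHomogeneous.eq_zero_of_eval_eq_zero {f : MvPolynomial (Fin 2) K}
    (hf : f.IsHomogeneous n) {q : Fin (n + 1) → K × K}
    (hq : Pairwise fun i j => LinearIndependent K ![q i, q j])
    (h : ∀ i, eval ![(q i).1, (q i).2] f = 0) : f = 0 := by
  have hdet : (Matrix.projVandermonde (fun i => (q i).1) (fun i => (q i).2)).det ≠ 0 := by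
    rw [Matrix.det_projVandermonde]
    exact prod_ne_zero_iff.2 fun i _ => prod_ne_zero_iff.2 fun j hj =>
      (hq (mem_Ioi.1 hj).ne).fst_mul_snd_sub_ne_zero
  have hcoeff : (fun j => coeff (binaryExponent n j) f) = 0 :=
    Matrix.eq_zero_of_mulVec_eq_zero hdet <| _root_.funext fun i => by
      simpa [hf.eval_eq_sum, Matrix.mulVec, dotProduct, Matrix.projVandermonde_apply] using h i
  ext d
  by_cases hd : d.degree = n
  · obtain ⟨j, rfl⟩ := exists_binaryExponent_eq hd
    exact congr_fun hcoeff j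
  · exact hf.coeff_eq_zero hd

theorem finrank_le_of_eval_eq_zero {ι : Type*} [Fintype ι] [DecidableEq ι]
    {V : Submodule K (MvPolynomial (Fin 2) K)} (hV : V ≤ homogeneousSubmodule (Fin 2) K n)
    {p : ι → K × K} (hp : Pairwise fun i j => LinearIndependent K ![p i, p j])
    (hcard : n + 1 ≤ Fintype.card ι) {s : Finset ι}
    (hs : ∀ f ∈ V, ∀ i ∈ s, eval ![(p i).1, (p i).2] f = 0) :
    Module.finrank K V ≤ n + 1 - #s := by
  obtain ⟨t, hts, ht⟩ := exists_subset_card_eq (s := sᶜ) (n := n + 1 - #s)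
    (by rw [card_compl]; omega)
  have hst : Fintype.card (Fin (n + 1)) ≤ Fintype.card (s ∪ t : Finset ι) := by
    rw [Fintype.card_coe, card_union_of_disjoint (disjoint_left.2 fun i hi hit =>
      mem_compl.1 (hts hit) hi), Fintype.card_fin]
    omega
  obtain ⟨e⟩ := Function.Embedding.nonempty_of_card_le hst
  let evalAt (i : ι) : V →ₗ[K] K := (aeval ![(p i).1, (p i).2]).toLinearMap ∘ₗ V.subtype
  have hinj : Function.Injective (LinearMap.pi fun i : t => evalAt i) := by
    rw [← LinearMap.ker_eq_bot, Submodule.eq_bot_iff]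
    rintro ⟨f, hfV⟩ hf
    refine Subtype.ext (((mem_homogeneousSubmodule _ _).1 (hV hfV)).eq_zero_of_eval_eq_zero
      (q := fun k => p (e k)) (fun k l hkl => hp fun h => hkl (e.injective (Subtype.ext h))) ?_)
    intro k
    rcases mem_union.1 (e k).2 with hk | hk
    · exact hs f hfV _ hk
    · simpa [evalAt, coe_aeval_eq_eval] using congr_fun (LinearMap.mem_ker.1 hf) ⟨_, hk⟩
  simpa [ht] using LinearMap.finrank_le_finrank_of_injective hinj

end MvPolynomial

theorem Submodule.finrank_le_of_mul_mem {K A : Type*} [Field K] [Ring A] [NoZeroDivisors A]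
    [Algebra K A] {g : A} (hg : g ≠ 0) {U V : Submodule K A} [FiniteDimensional K V]
    (h : ∀ f ∈ U, g * f ∈ V) : Module.finrank K U ≤ Module.finrank K V :=
  LinearMap.finrank_le_finrank_of_injective (f := (LinearMap.mulLeft K g).restrict h)
    fun _ _ hfg => Subtype.ext (mul_right_injective₀ hg (congrArg Subtype.val hfg))

theorem stmt_13_general (p : Fin 4 → ℂ × ℂ)
    (hp : ∀ i j, i ≠ j → LinearIndependent ℂ ![p i, p j])
    (U₁ U₀ : Submodule ℂ (MvPolynomial (Fin 2) ℂ))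
    (S : Fin 4 → Submodule ℂ ℂ)
    (hU₁ : U₁ ≤ homogeneousSubmodule (Fin 2) ℂ 1)
    (hU₀ : U₀ ≤ homogeneousSubmodule (Fin 2) ℂ 2)
    (hx₁ : ∀ f ∈ U₁, X 0 * f ∈ U₀)
    (hev : ∀ i : Fin 4, ∀ f ∈ U₀, eval ![(p i).1, (p i).2] f ∈ S i)
    (hne : U₁ ≠ homogeneousSubmodule (Fin 2) ℂ 1) :
    Module.finrank ℂ U₁ + Module.finrank ℂ U₀ ≤ ∑ i, Module.finrank ℂ (S i) := by
  set s := univ.filter fun i => S i = ⊥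
  have hU₀s : Module.finrank ℂ U₀ ≤ 3 - #s :=
    finrank_le_of_eval_eq_zero hU₀ hp (by simp) fun f hf i hi => by
      simpa [(mem_filter.1 hi).2] using hev i f hf
  have hA₁ : Module.finrank ℂ (homogeneousSubmodule (Fin 2) ℂ 1) ≤ 2 := by
    simpa using finrank_le_of_eval_eq_zero le_rfl hp (by simp) (s := ∅) (by simp)
  have hU₁A₁ := Submodule.finrank_lt_finrank_of_lt (lt_of_le_of_ne hU₁ hne)
  have : FiniteDimensional ℂ U₀ := Submodule.finiteDimensional_of_le hU₀
  have hU₁U₀ := Submodule.finrank_le_of_mul_mem (X_ne_zero 0) hx₁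
  have hS : #sᶜ ≤ ∑ i, Module.finrank ℂ (S i) := by
    rw [card_eq_sum_ones]
    refine (sum_le_sum fun i hi => ?_).trans (sum_le_sum_of_subset (subset_univ _))
    simpa [s] using hi
  have hs : #s + #sᶜ = 4 := by rw [card_add_card_compl, Fintype.card_fin]
  omega

/-- μ-stability of the quiver representation `(A₁ ⇉ A₂ → ℂ⁴)` corresponding to
`ℂ(2)[-1]`: for pairwise linearly independent points `p⁽ⁱ⁾ ∈ ℂ² ∖ {0}`, every
subrepresentation `(U₁, U₀, S)` with `U₁ ⊊ A₁` satisfies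
`dim U₁ + dim U₀ ≤ ∑ᵢ dim Sᵢ`. -/
theorem stmt_13 (p : Fin 4 → ℂ × ℂ)
    (hp : ∀ i j, i ≠ j → LinearIndependent ℂ ![p i, p j])
    (U₁ U₀ : Submodule ℂ (MvPolynomial (Fin 2) ℂ))
    (S : Fin 4 → Submodule ℂ ℂ)
    (hU₁ : U₁ ≤ homogeneousSubmodule (Fin 2) ℂ 1)
    (hU₀ : U₀ ≤ homogeneousSubmodule (Fin 2) ℂ 2)
    (hx₁ : ∀ f ∈ U₁, X 0 * f ∈ U₀)
    (hx₂ : ∀ f ∈ U₁, X 1 * f ∈ U₀)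
    (hev : ∀ i : Fin 4, ∀ f ∈ U₀, eval ![(p i).1, (p i).2] f ∈ S i)
    (hne : U₁ ≠ homogeneousSubmodule (Fin 2) ℂ 1) :
    Module.finrank ℂ U₁ + Module.finrank ℂ U₀ ≤ ∑ i, Module.finrank ℂ (S i) :=
  stmt_13_general p hp U₁ U₀ S hU₁ hU₀ hx₁ hev hne
end
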